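/- arXiv:2302.10015 — 3 statements merged into one kernel-verified Lean document; each statement's English description precedes it below -/
import Mathlib

section
/- If (i,j) is a reticulated-cherry of a binary phylogenetic network N, then for every tree node u of N, μ_i(u) ≥ μ_j(u): the number of paths from u to leaf i is at least the number of paths from u to leaf j. -/
open Relation

/-- A (candidate) binary phylogenetic network: a finite directed graph with
leaf labels in a taxon set `X ⊆ [n] = {1,…,n}`. Well-formedness is `Valid`. -/
structure BPN (n : ℕ) where
  V : Type
  [instFin : Fintype V]
  [instDec : DecidableEq V]
  arc : V → V → Prop
  X : Finset ℕ
  label : V → ℕ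

namespace BPN

attribute [instance] BPN.instFin BPN.instDec

variable {n : ℕ}

noncomputable def indeg (N : BPN n) (u : N.V) : ℕ := Nat.card {v : N.V // N.arc v u}
noncomputable def outdeg (N : BPN n) (u : N.V) : ℕ := Nat.card {v : N.V // N.arc u v}

def isRoot (N : BPN n) (u : N.V) : Prop := N.indeg u = 0 ∧ N.outdeg u = 1
def isLeaf (N : BPN n) (u : N.V) : Prop := N.indeg u = 1 ∧ N.outdeg u = 0
def isTree (N : BPN n) (u : N.V) : Prop := N.indeg u = 1 ∧ N.outdeg u = 2
def isRetic (N : BPN n) (u : N.V) : Prop := N.indeg u = 2 ∧ N.outdeg u = 1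
/-- leaves together with tree nodes -/
def isVT (N : BPN n) (u : N.V) : Prop := N.isLeaf u ∨ N.isTree u

/-- Well-formedness of a binary phylogenetic network on `X ⊆ [n]`:
acyclic, every node is a root/leaf/tree node/reticulation, unique root,
and the leaves are bijectively labeled by `X`. -/
def Valid (N : BPN n) : Prop :=
  (∀ u v : N.V, ReflTransGen N.arc u v → ReflTransGen N.arc v u → u = v) ∧
  (∀ u : N.V, N.isRoot u ∨ N.isLeaf u ∨ N.isTree u ∨ N.isRetic u) ∧
  (∃! r : N.V, N.isRoot r) ∧
  (∀ u : N.V, N.isLeaf u → N.label u ∈ N.X ∧ 1 ≤ N.label u ∧ N.label u ≤ n) ∧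
  (∀ u v : N.V, N.isLeaf u → N.isLeaf v → N.label u = N.label v → u = v) ∧
  (∀ i ∈ N.X, ∃ u : N.V, N.isLeaf u ∧ N.label u = i)

/-- `IsPath N u v l` : `l` is the list of nodes visited (after `u`) by a
directed path from `u` to `v`; the trivial path is `[]`. -/
inductive IsPath (N : BPN n) : N.V → N.V → List N.V → Prop
  | nil (u : N.V) : IsPath N u u []
  | cons {u v w : N.V} {l : List N.V} : N.arc u v → IsPath N v w l → IsPath N u w (v :: l)

/-- the number `m(u,v)` of directed paths from `u` to `v` -/
noncomputable def m (N : BPN n) (u v : N.V) : ℕ := Nat.card {l : List N.V // N.IsPath u v l}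

open Classical in
/-- the extended μ-vector: position `0` counts paths to reticulations,
position `k ≥ 1` counts paths to the leaf labeled `k`. -/
noncomputable def mu (N : BPN n) (u : N.V) : Fin (n + 1) → ℕ := fun k =>
  if k = 0 then ∑ h ∈ Finset.univ.filter (fun h => N.isRetic h), N.m u h
  else ∑ v ∈ Finset.univ.filter (fun v => N.isLeaf v ∧ N.label v = (k : ℕ)), N.m u v

/-- `delta S` is the 0/1 vector with `1` exactly in the positions of `S`. -/
def delta (S : Finset (Fin (n + 1))) : Fin (n + 1) → ℕ := fun k => if k ∈ S then 1 else 0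

open Classical in
/-- the extended μ-representation: the multiset of μ-vectors of leaves and tree nodes -/
noncomputable def muRep (N : BPN n) : Multiset (Fin (n + 1) → ℕ) :=
  (Finset.univ.filter (fun u => N.isVT u)).val.map N.mu

/-- `(i,j)` is a cherry realized by the leaves `xi, xj` with common parent `p`. -/
def IsCherry (N : BPN n) (i j : Fin (n + 1)) (xi xj p : N.V) : Prop :=
  N.isLeaf xi ∧ N.label xi = (i : ℕ) ∧ N.isLeaf xj ∧ N.label xj = (j : ℕ) ∧
  xi ≠ xj ∧ N.arc p xi ∧ N.arc p xj

/-- `(i,j)` is a reticulated-cherry: the parent `p` of leaf `xi` is a reticulation,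
the parent `q` of leaf `xj` is a tree node, and there is an arc from `q` to `p`. -/
def IsRetCherry (N : BPN n) (i j : Fin (n + 1)) (xi xj p q : N.V) : Prop :=
  N.isLeaf xi ∧ N.label xi = (i : ℕ) ∧ N.isLeaf xj ∧ N.label xj = (j : ℕ) ∧
  xi ≠ xj ∧ N.arc p xi ∧ N.arc q xj ∧ N.isRetic p ∧ N.isTree q ∧ N.arc q p

/-- Cherry reduction: remove leaf `xi` and suppress the elementary node `p`
(connecting the parent of `p` directly to `xj`). -/
def cherryReduce (N : BPN n) (xi xj p : N.V) : BPN n where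
  V := {v : N.V // v ≠ xi ∧ v ≠ p}
  arc u v := N.arc u.1 v.1 ∨ (N.arc u.1 p ∧ v.1 = xj)
  X := N.X.erase (N.label xi)
  label v := N.label v.1

/-- Reticulated-cherry reduction: delete the arc `q → p` and suppress the
elementary nodes `p` (connecting its other parent to `xi`) and `q`
(connecting its parent to `xj`). -/
def retCherryReduce (N : BPN n) (xi xj p q : N.V) : BPN n where
  V := {v : N.V // v ≠ p ∧ v ≠ q}
  arc u v := N.arc u.1 v.1 ∨ (N.arc u.1 p ∧ v.1 = xi) ∨ (N.arc u.1 q ∧ v.1 = xj)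
  X := N.X
  label v := N.label v.1

/-- Isomorphism of labeled networks: digraph isomorphism preserving leaf labels. -/
def Iso (N M : BPN n) : Prop :=
  ∃ f : N.V ≃ M.V, (∀ u v : N.V, N.arc u v ↔ M.arc (f u) (f v)) ∧
    ∀ u : N.V, N.isLeaf u → M.label (f u) = N.label u

/-- `N` reduces in one step by the pair `s` to (an isomorphic copy of) `M`. -/
def ReducesTo (N : BPN n) (s : Fin (n + 1) × Fin (n + 1)) (M : BPN n) : Prop :=
  (∃ xi xj p, N.IsCherry s.1 s.2 xi xj p ∧ Iso (N.cherryReduce xi xj p) M) ∨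
  (∃ xi xj p q, N.IsRetCherry s.1 s.2 xi xj p q ∧ Iso (N.retCherryReduce xi xj p q) M)

/-- `ReducesSeq N S M` : the sequence of pairs `S` is reducible in `N` and reduces it to `M`. -/
inductive ReducesSeq : BPN n → List (Fin (n + 1) × Fin (n + 1)) → BPN n → Prop
  | nil (N : BPN n) : ReducesSeq N [] N
  | cons {N M P : BPN n} {s S} : ReducesTo N s M → ReducesSeq M S P → ReducesSeq N (s :: S) P

/-- the trivial network `I_i`: a root and a single leaf labeled `i` -/
def IsTrivial (N : BPN n) (i : Fin (n + 1)) : Prop :=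
  ∃ r u : N.V, r ≠ u ∧ N.arc r u ∧ N.isLeaf u ∧ N.label u = (i : ℕ) ∧ ∀ v : N.V, v = r ∨ v = u

/-- orchard networks: valid networks admitting a complete reduction sequence -/
def IsOrchard (N : BPN n) : Prop :=
  N.Valid ∧ ∃ S M i, ReducesSeq N S M ∧ IsTrivial M i

/-- cherry-reduction of a multiset of vectors -/
def cherryRed (i j : Fin (n + 1)) (M : Multiset (Fin (n + 1) → ℕ)) :
    Multiset (Fin (n + 1) → ℕ) :=
  ((M.erase (delta {i})).erase (delta {i, j})).map fun μ k => if k = i then 0 else μ k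

/-- reticulated-cherry-reduction of a multiset of vectors -/
def retCherryRed (i j : Fin (n + 1)) (M : Multiset (Fin (n + 1) → ℕ)) :
    Multiset (Fin (n + 1) → ℕ) :=
  (M.erase (delta {0, i, j})).map fun μ k =>
    if k = 0 then μ 0 - μ i else if k = i then μ i - μ j else μ k

/-- `(i,j)` is a cherry of a multiset of vectors -/
def IsCherryM (i j : Fin (n + 1)) (M : Multiset (Fin (n + 1) → ℕ)) : Prop :=
  M.count (delta {i, j}) = 1 ∧ ∀ μ ∈ M, μ ≠ delta {i} → μ ≠ delta {j} → μ i = μ j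

/-- `(i,j)` is a reticulated-cherry of a multiset of vectors -/
def IsRetCherryM (i j : Fin (n + 1)) (M : Multiset (Fin (n + 1) → ℕ)) : Prop :=
  M.count (delta {0, i, j}) = 1 ∧
    ∀ μ ∈ M, μ ≠ delta {i} → μ ≠ delta {j} → μ j ≤ μ i ∧ μ i ≤ μ 0

/-- one reduction step on multisets of vectors -/
inductive MStep :
    Multiset (Fin (n + 1) → ℕ) → Fin (n + 1) × Fin (n + 1) → Multiset (Fin (n + 1) → ℕ) → Prop
  | cherry {M : Multiset (Fin (n + 1) → ℕ)} {i j} :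
      IsCherryM i j M → MStep M (i, j) (cherryRed i j M)
  | ret {M : Multiset (Fin (n + 1) → ℕ)} {i j} :
      IsRetCherryM i j M → MStep M (i, j) (retCherryRed i j M)

/-- reduction of a multiset of vectors by a sequence of pairs -/
inductive MSeq :
    Multiset (Fin (n + 1) → ℕ) → List (Fin (n + 1) × Fin (n + 1)) → Multiset (Fin (n + 1) → ℕ) → Prop
  | nil (M : Multiset (Fin (n + 1) → ℕ)) : MSeq M [] M
  | cons {M M' M'' : Multiset (Fin (n + 1) → ℕ)} {s S} :
      MStep M s M' → MSeq M' S M'' → MSeq M (s :: S) M''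

open Classical in
/-- the μ-distance: cardinality of the symmetric difference of the μ-representations -/
noncomputable def dmu (N M : BPN n) : ℕ :=
  (symmDiff N.muRep.toFinset M.muRep.toFinset).card

end BPN

namespace BPN

section Aux

variable {n : ℕ} {N : BPN n}

lemma isPath_toRTG {u v : N.V} {l : List N.V} (h : N.IsPath u v l) :
    ReflTransGen N.arc u v := by
  induction h with
  | nil => exact .refl
  | cons hav _ ih => exact .head hav ih

lemma isPath_append {u v w : N.V} {l l' : List N.V} (h : N.IsPath u v l)
    (h' : N.IsPath v w l') : N.IsPath u w (l ++ l') := by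
  induction h with
  | nil => simpa using h'
  | cons h1 _ ih => exact .cons h1 (ih h')

lemma isPath_mem {b v : N.V} {l : List N.V} (h : N.IsPath b v l) :
    ∀ x ∈ b :: l, ReflTransGen N.arc b x ∧ ReflTransGen N.arc x v := by
  induction h with
  | nil u =>
    intro x hx
    simp only [List.mem_singleton] at hx
    subst hx; exact ⟨.refl, .refl⟩
  | cons hab h ih =>
    intro x hx
    rcases List.mem_cons.1 hx with rfl | hx
    · exact ⟨.refl, .head hab (isPath_toRTG h)⟩
    · obtain ⟨h1, h2⟩ := ih x hx
      exact ⟨.head hab h1, h2⟩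

lemma isPath_decomp {u w : N.V} {l : List N.V} (h : N.IsPath u w l) (hl : l ≠ []) :
    ∃ l₀ v, N.IsPath u v l₀ ∧ N.arc v w ∧ l = l₀ ++ [w] := by
  induction h with
  | nil => exact absurd rfl hl
  | @cons a b w l hab h ih =>
    rcases eq_or_ne l [] with rfl | hne
    · cases h
      exact ⟨[], a, .nil a, hab, rfl⟩
    · obtain ⟨l₀, v, h1, h2, h3⟩ := ih hne
      exact ⟨b :: l₀, v, .cons hab h1, h2, by rw [h3]; rfl⟩

lemma card_one_unique {P : N.V → Prop} (h : Nat.card {y : N.V // P y} = 1)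
    {a b : N.V} (ha : P a) (hb : P b) : a = b := by
  have hs := (Nat.card_eq_one_iff_unique.mp h).1
  exact congrArg Subtype.val (hs.elim ⟨a, ha⟩ ⟨b, hb⟩)

lemma indeg_pos {x y : N.V} (h : N.arc y x) : 0 < N.indeg x := by
  haveI : Nonempty {v : N.V // N.arc v x} := ⟨⟨y, h⟩⟩
  exact Nat.card_pos

lemma outdeg_pos {x y : N.V} (h : N.arc x y) : 0 < N.outdeg x := by
  haveI : Nonempty {v : N.V // N.arc x v} := ⟨⟨y, h⟩⟩
  exact Nat.card_pos

lemma selfLoop_classify (hN : N.Valid) {x : N.V} (hx : N.arc x x) :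
    (∀ y, N.arc y x → y = x) ∨ (∀ y, N.arc x y → y = x) := by
  rcases hN.2.1 x with hr | hl | ht | hret
  · exact absurd hr.1 (by have := indeg_pos hx; omega)
  · exact absurd hl.2 (by have := outdeg_pos hx; omega)
  · exact Or.inl fun y hy => card_one_unique ht.1 hy hx
  · exact Or.inr fun y hy => card_one_unique hret.2 hy hx

lemma reach_selfparent {x : N.V} (hx : ∀ y, N.arc y x → y = x) :
    ∀ {u v : N.V}, ReflTransGen N.arc u v → v = x → u = x := by
  intro u v h
  induction h with
  | refl => exact id
  | tail _ h2 ih => rintro rfl; exact ih (hx _ h2)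

lemma reach_selfchild {x : N.V} (hx : ∀ y, N.arc x y → y = x) {v : N.V}
    (h : ReflTransGen N.arc x v) : v = x := by
  induction h with
  | refl => rfl
  | tail _ h2 ih => exact hx _ (ih ▸ h2)

lemma path_nodup (hN : N.Valid) {v : N.V} :
    ∀ {u : N.V} {l : List N.V}, N.IsPath u v l →
      (∀ x, ReflTransGen N.arc u x → ReflTransGen N.arc x v → ¬ N.arc x x) →
      (u :: l).Nodup := by
  intro u l h
  induction h with
  | nil u => intro _; simp
  | @cons a b w l hab h ih =>
    intro H
    have H' : ∀ x, ReflTransGen N.arc b x → ReflTransGen N.arc x w → ¬ N.arc x x :=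
      fun x h1 h2 => H x (.head hab h1) h2
    refine List.nodup_cons.2 ⟨?_, ih H'⟩
    intro hmem
    obtain ⟨h1, h2⟩ := isPath_mem h a hmem
    have hab' : a = b := hN.1 a b (ReflTransGen.single hab) h1
    subst hab'
    exact H a .refl (.head hab (isPath_toRTG h)) hab

lemma finite_paths (hN : N.Valid) {u v : N.V}
    (H : ∀ x, ReflTransGen N.arc u x → ReflTransGen N.arc x v → ¬ N.arc x x) :
    Finite {l : List N.V // N.IsPath u v l} := by
  haveI := (List.finite_length_le N.V (Fintype.card N.V)).to_subtype
  have key : ∀ l : {l : List N.V // N.IsPath u v l}, l.1.length ≤ Fintype.card N.V := by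
    rintro ⟨l, hl⟩
    have hnd := path_nodup hN hl H
    have h2 := hnd.length_le_card
    simp only [List.length_cons] at h2
    show l.length ≤ Fintype.card N.V
    omega
  refine Finite.of_injective
    (fun l => (⟨l.1, key l⟩ : {l : List N.V | l.length ≤ Fintype.card N.V})) ?_
  intro a b hab
  have h2 := Subtype.ext_iff.mp hab
  exact Subtype.ext h2

lemma isPath_replicate {u v : N.V} (hu : N.arc u u) {l : List N.V}
    (hl : N.IsPath u v l) : ∀ k, N.IsPath u v (List.replicate k u ++ l) := by
  intro k
  induction k with
  | zero => simpa using hl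
  | succ k ih => exact .cons hu ih

lemma m_eq_zero_of_selfloop {u : N.V} (hu : N.arc u u) (v : N.V) : N.m u v = 0 := by
  rcases isEmpty_or_nonempty {l : List N.V // N.IsPath u v l} with he | ⟨⟨l, hl⟩⟩
  · exact Nat.card_of_isEmpty
  · haveI : Infinite {l : List N.V // N.IsPath u v l} := by
      apply Infinite.of_injective (fun k : ℕ => ⟨List.replicate k u ++ l, isPath_replicate hu hl k⟩)
      intro a b hab
      have := congrArg (fun x : {l : List N.V // N.IsPath u v l} => x.1.length) hab
      simpa using this
    exact Nat.card_eq_zero_of_infinite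

open Classical in
lemma mu_leaf (hN : N.Valid) (u : N.V) {k : Fin (n + 1)} {x : N.V}
    (hx : N.isLeaf x) (hlx : N.label x = (k : ℕ)) : N.mu u k = N.m u x := by
  have hb := (hN.2.2.2.1 x hx).2.1
  have hk0 : k ≠ 0 := by
    intro hk
    rw [hk] at hlx
    simp only [Fin.val_zero] at hlx
    omega
  classical
  rw [mu, if_neg hk0]
  have hset : Finset.univ.filter (fun v => N.isLeaf v ∧ N.label v = (k : ℕ)) = {x} := by
    ext v
    simp only [Finset.mem_filter, Finset.mem_univ, true_and, Finset.mem_singleton]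
    constructor
    · rintro ⟨hv, hlv⟩
      exact hN.2.2.2.2.1 v x hv hx (hlv.trans hlx.symm)
    · rintro rfl; exact ⟨hx, hlx⟩
  rw [hset, Finset.sum_singleton]

end Aux

/-- in a reticulated-cherry `(i,j)`, every tree node `u` has
`μ_i(u) ≥ μ_j(u)`. -/
theorem stmt8 {n : ℕ} (N : BPN n) (hN : N.Valid) (i j : Fin (n + 1))
    (xi xj p q : N.V) (h : N.IsRetCherry i j xi xj p q) :
    ∀ u : N.V, N.isTree u → N.mu u j ≤ N.mu u i := by
  obtain ⟨hxi, hlxi, hxj, hlxj, hne, hpxi, hqxj, hp, hq, hqp⟩ := h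
  intro u hu
  rw [mu_leaf hN u hxj hlxj, mu_leaf hN u hxi hlxi]
  by_cases huu : N.arc u u
  · rw [m_eq_zero_of_selfloop huu xj]
    exact Nat.zero_le _
  -- general fact: no self-loop node lies on a path from u to a leaf
  have Hgen : ∀ w : N.V, N.isLeaf w → ∀ x, ReflTransGen N.arc u x →
      ReflTransGen N.arc x w → ¬ N.arc x x := by
    intro w hw x hux hxw hxx
    rcases selfLoop_classify hN hxx with hpar | hchild
    · exact huu ((reach_selfparent hpar hux rfl) ▸ hxx)
    · have hwx : w = x := reach_selfchild hchild hxw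
      subst hwx
      have h1 := outdeg_pos hxx
      have h2 := hw.2
      omega
  haveI : Finite {l : List N.V // N.IsPath u xi l} := finite_paths hN (Hgen xi hxi)
  -- u ≠ xj
  have huxj : u ≠ xj := by
    intro h
    rw [h] at hu
    have := hxj.2
    have := hu.2
    omega
  -- every path from u to xj ends with xj, coming from q
  have hform : ∀ l : List N.V, N.IsPath u xj l →
      l = l.dropLast ++ [xj] ∧ N.IsPath u q l.dropLast := by
    intro l hl
    have hlne : l ≠ [] := by
      rintro rfl
      cases hl
      exact huxj rfl
    obtain ⟨l₀, v, h1, h2, h3⟩ := isPath_decomp hl hlne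
    have hvq : v = q := card_one_unique hxj.1 h2 hqxj
    subst hvq
    have hdl : l.dropLast = l₀ := by rw [h3, List.dropLast_concat]
    exact ⟨by rw [hdl, ← h3], hdl ▸ h1⟩
  -- the injection
  have hinj : N.m u xj ≤ N.m u xi := by
    apply Nat.card_le_card_of_injective
      (f := fun l : {l : List N.V // N.IsPath u xj l} =>
        (⟨l.1.dropLast ++ [p, xi],
          by
            have := (hform l.1 l.2).2
            have htail : N.IsPath q xi [p, xi] := .cons hqp (.cons hpxi (.nil xi))
            exact isPath_append this htail⟩ : {l : List N.V // N.IsPath u xi l}))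
    rintro ⟨a, ha⟩ ⟨b, hb⟩ hab
    have hab' := Subtype.ext_iff.mp hab
    dsimp only at hab'
    have hd : a.dropLast = b.dropLast := by
      have := congrArg List.dropLast (congrArg List.dropLast hab')
      simpa [List.dropLast_concat] using this
    have hab2 : a = b := by
      rw [(hform a ha).1, (hform b hb).1, hd]
    exact Subtype.ext hab2
  exact hinj


end BPN
end

section
/- Let N be a binary phylogenetic network and (i,j) a cherry of N. Then for every node u of N other than i and the common parent p of i and j, u is a node of the reduced network N^{(i,j)}, and the extended μ-vector of u in N^{(i,j)} satisfies: μ^{N^{(i,j)}}_k(u) = μ^N_k(u) for all k ≠ i, and μ^{N^{(i,j)}}_i(u) = 0. Hence 𝛍(N^{(i,j)}) = 𝛍(N)^{(i,j)}. -/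
open Relation

/-!
Suppressing `p` turns `N` into `N^{(i,j)}` without changing the in- and out-degrees of the
surviving nodes. A path of `N^{(i,j)}` lifts to `N` by re-inserting `p` in front of `xj`, and
every path of `N` between surviving nodes arises this way, since it cannot pass through the
leaf `xi` and can enter `p` only to continue to `xj`. Hence path counts between surviving
nodes agree, and their μ-vectors change only in the coordinate `i`, whose leaf is gone. The
two deleted vectors are `μ(xi) = δ_i` and `μ(p) = μ(xi) + μ(xj) = δ_{i,j}`.
-/

namespace BPN

variable {n : ℕ} {N : BPN n}

open Classical in
lemma outdeg_eq_card (u : N.V) : N.outdeg u = (Finset.univ.filter (N.arc u)).card := by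
  rw [outdeg, Nat.card_eq_fintype_card, Fintype.card_subtype]

lemma not_arc_of_isLeaf {u : N.V} (hu : N.isLeaf u) (v : N.V) : ¬N.arc u v := by
  classical
  intro huv
  have : 0 < N.outdeg u :=
    outdeg_eq_card u ▸ Finset.card_pos.mpr ⟨v, by simpa using huv⟩
  exact this.ne' hu.2

lemma eq_of_arc_of_arc_of_indeg_eq_one {v a b : N.V} (hv : N.indeg v = 1) (ha : N.arc a v)
    (hb : N.arc b v) : a = b :=
  congrArg Subtype.val ((Nat.card_eq_one_iff_unique.mp hv).1.allEq ⟨a, ha⟩ ⟨b, hb⟩)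

lemma two_le_outdeg {q a b : N.V} (ha : N.arc q a) (hb : N.arc q b) (hab : a ≠ b) :
    2 ≤ N.outdeg q := by
  classical
  rw [outdeg_eq_card, ← Finset.card_pair hab]
  exact Finset.card_le_card fun x hx => by
    rcases Finset.mem_insert.mp hx with rfl | hx
    · simpa using ha
    · simpa [Finset.mem_singleton.mp hx] using hb

lemma eq_or_eq_of_outdeg_eq_two {q a b w : N.V} (hq : N.outdeg q = 2) (ha : N.arc q a)
    (hb : N.arc q b) (hab : a ≠ b) (hw : N.arc q w) : w = a ∨ w = b := by
  classical
  by_contra! hne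
  have hsub : ({w, a, b} : Finset N.V) ⊆ Finset.univ.filter (N.arc q) := by
    intro x hx
    simp only [Finset.mem_insert, Finset.mem_singleton] at hx
    rcases hx with rfl | rfl | rfl <;> simpa
  have := Finset.card_le_card hsub
  rw [← outdeg_eq_card, hq, Finset.card_insert_of_notMem (by simp [hne.1, hne.2]),
    Finset.card_pair hab] at this
  omega

lemma not_isRetic_of_isLeaf {u : N.V} (hu : N.isLeaf u) : ¬N.isRetic u := fun h => by
  have := hu.1; have := h.1; omega

lemma not_isRetic_of_isTree {u : N.V} (hu : N.isTree u) : ¬N.isRetic u := fun h => by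
  have := hu.2; have := h.2; omega

lemma not_isLeaf_of_isTree {u : N.V} (hu : N.isTree u) : ¬N.isLeaf u := fun h => by
  have := hu.2; have := h.2; omega

lemma Valid.eq_of_label_eq (hN : N.Valid) {u v : N.V} (hu : N.isLeaf u) (hv : N.isLeaf v)
    (huv : N.label u = N.label v) : u = v :=
  hN.2.2.2.2.1 u v hu hv huv

lemma Valid.ne_zero_of_label_eq (hN : N.Valid) {u : N.V} (hu : N.isLeaf u) {k : Fin (n + 1)}
    (hk : N.label u = k) : k ≠ 0 := by
  rintro rfl
  have := (hN.2.2.2.1 u hu).2.1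
  simp_all

lemma isPath_iff_of_isLeaf {u v : N.V} {l : List N.V} (hu : N.isLeaf u) :
    N.IsPath u v l ↔ v = u ∧ l = [] := by
  constructor
  · rintro (_ | ⟨huw, -⟩)
    · exact ⟨rfl, rfl⟩
    · exact absurd huw (not_arc_of_isLeaf hu _)
  · rintro ⟨rfl, rfl⟩
    exact IsPath.nil _

lemma m_eq_one_of_isPath_iff {u v : N.V} (l₀ : List N.V)
    (h : ∀ l, N.IsPath u v l ↔ l = l₀) : N.m u v = 1 :=
  Nat.card_eq_one_iff_exists.mpr
    ⟨⟨l₀, (h l₀).mpr rfl⟩, fun l => Subtype.ext ((h l.1).mp l.2)⟩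

lemma m_eq_zero_of_not_isPath {u v : N.V} (h : ∀ l, ¬N.IsPath u v l) : N.m u v = 0 :=
  Nat.card_eq_zero.mpr (Or.inl ⟨fun l => h l.1 l.2⟩)

lemma m_of_isLeaf {u : N.V} (hu : N.isLeaf u) (v : N.V) :
    N.m u v = if v = u then 1 else 0 := by
  split_ifs with hv
  · exact m_eq_one_of_isPath_iff [] fun l => by simp [isPath_iff_of_isLeaf hu, hv]
  · exact m_eq_zero_of_not_isPath fun l => by simp [isPath_iff_of_isLeaf hu, hv]

section MuVectors

open Classical

lemma delta_pair {i j : Fin (n + 1)} (hij : i ≠ j) : delta {i, j} = delta {i} + delta {j} := by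
  funext k
  by_cases hki : k = i
  · subst hki; simp [delta, hij]
  · by_cases hkj : k = j <;> simp [delta, hki, hkj, hij.symm]

lemma mu_of_isLeaf {u : N.V} (hu : N.isLeaf u) {k : Fin (n + 1)} (hk0 : k ≠ 0)
    (hk : N.label u = k) : N.mu u = delta {k} := by
  funext k'
  simp only [mu, delta, m_of_isLeaf hu, Finset.sum_ite_eq', Finset.mem_filter,
    Finset.mem_univ, true_and, Finset.mem_singleton, not_isRetic_of_isLeaf hu, hu, hk]
  split_ifs <;> simp_all [Fin.val_inj]

lemma mu_eq_add_of_m_eq_add {u a b : N.V}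
    (h : ∀ v, N.isRetic v ∨ N.isLeaf v → N.m u v = N.m a v + N.m b v) :
    N.mu u = N.mu a + N.mu b := by
  funext k
  simp only [mu, Pi.add_apply]
  split_ifs
  · rw [← Finset.sum_add_distrib]
    exact Finset.sum_congr rfl fun v hv => h v (Or.inl (Finset.mem_filter.mp hv).2)
  · rw [← Finset.sum_add_distrib]
    exact Finset.sum_congr rfl fun v hv => h v (Or.inr (Finset.mem_filter.mp hv).2.1)

lemma muRep_eq_cons_cons {u v : N.V} (hu : N.isVT u) (hv : N.isVT v) (huv : u ≠ v) :
    N.muRep = N.mu u ::ₘ N.mu v ::ₘ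
      ((((Finset.univ.filter N.isVT).erase u).erase v).val.map N.mu) := by
  have hu' : u ∈ Finset.univ.filter N.isVT := by simpa using hu
  have hv' : v ∈ (Finset.univ.filter N.isVT).erase u := by simpa [huv.symm] using hv
  rw [← Multiset.map_cons, ← Multiset.map_cons, Finset.erase_val, Multiset.cons_erase hv',
    Finset.erase_val, Multiset.cons_erase hu', muRep]

end MuVectors

section Lists

variable {α : Type*}

def insertBefore [DecidableEq α] (a b : α) (l : List α) : List α :=
  l.flatMap fun x => if x = a then [b, a] else [x]

def filterSubtype (q : α → Prop) [DecidablePred q] (l : List α) : List (Subtype q) :=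
  l.filterMap fun x => if h : q x then some ⟨x, h⟩ else none

lemma insertBefore_cons [DecidableEq α] (a b x : α) (l : List α) :
    insertBefore a b (x :: l) = if x = a then b :: a :: insertBefore a b l
      else x :: insertBefore a b l := by
  unfold insertBefore
  split_ifs <;> simp [*]

lemma filterSubtype_cons (q : α → Prop) [DecidablePred q] (x : α) (l : List α) :
    filterSubtype q (x :: l) = if h : q x then ⟨x, h⟩ :: filterSubtype q l
      else filterSubtype q l := by
  unfold filterSubtype
  split_ifs <;> simp_all

lemma filterSubtype_insertBefore_map_val [DecidableEq α] {q : α → Prop} [DecidablePred q]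
    {a b : α} (ha : q a) (hb : ¬q b) (l : List (Subtype q)) :
    filterSubtype q (insertBefore a b (l.map Subtype.val)) = l := by
  induction l with
  | nil => rfl
  | cons x l ih =>
    obtain ⟨x, hx⟩ := x
    by_cases hxa : x = a
    · subst hxa
      simp only [List.map_cons, insertBefore_cons, if_pos, filterSubtype_cons, dif_neg hb,
        dif_pos hx, ih]
    · simp only [List.map_cons, insertBefore_cons, if_neg hxa, filterSubtype_cons, dif_pos hx, ih]

end Lists

def cherryReduceEmbedding (N : BPN n) (xi xj p : N.V) : (N.cherryReduce xi xj p).V ↪ N.V :=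
  Function.Embedding.subtype _

@[simp]
lemma cherryReduceEmbedding_apply {xi xj p : N.V} (v : (N.cherryReduce xi xj p).V) :
    N.cherryReduceEmbedding xi xj p v = v.1 :=
  rfl

structure IsCherryTriple (N : BPN n) (xi xj p : N.V) : Prop where
  isLeaf_left : N.isLeaf xi
  isLeaf_right : N.isLeaf xj
  left_ne_right : xi ≠ xj
  arc_left : N.arc p xi
  arc_right : N.arc p xj
  isTree_parent : N.isTree p

lemma IsCherry.isCherryTriple (hN : N.Valid) {i j : Fin (n + 1)} {xi xj p : N.V}
    (h : N.IsCherry i j xi xj p) : IsCherryTriple N xi xj p := by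
  obtain ⟨lxi, -, lxj, -, hne, axi, axj⟩ := h
  have h2 := two_le_outdeg axi axj hne
  refine ⟨lxi, lxj, hne, axi, axj, ?_⟩
  rcases hN.2.1 p with ⟨-, hr⟩ | ⟨-, hr⟩ | hr | ⟨-, hr⟩
  · omega
  · omega
  · exact hr
  · omega

namespace IsCherryTriple

variable {xi xj p : N.V} (c : IsCherryTriple N xi xj p)
include c

lemma left_ne_parent : xi ≠ p := by
  rintro rfl; exact not_arc_of_isLeaf c.isLeaf_left _ c.arc_left

lemma right_ne_parent : xj ≠ p := by
  rintro rfl; exact not_arc_of_isLeaf c.isLeaf_right _ c.arc_right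

lemma eq_of_arc_left {w : N.V} (hw : N.arc w xi) : w = p :=
  eq_of_arc_of_arc_of_indeg_eq_one c.isLeaf_left.1 hw c.arc_left

lemma eq_of_arc_right {w : N.V} (hw : N.arc w xj) : w = p :=
  eq_of_arc_of_arc_of_indeg_eq_one c.isLeaf_right.1 hw c.arc_right

lemma eq_or_eq_of_arc_parent {w : N.V} (hw : N.arc p w) : w = xi ∨ w = xj :=
  eq_or_eq_of_outdeg_eq_two c.isTree_parent.2 c.arc_left c.arc_right c.left_ne_right hw

lemma isPath_parent_iff {v : N.V} (hv : v ≠ p) {l : List N.V} :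
    N.IsPath p v l ↔ (v = xi ∧ l = [xi]) ∨ (v = xj ∧ l = [xj]) := by
  constructor
  · rintro (_ | ⟨hw, hl⟩)
    · exact absurd rfl hv
    · rcases c.eq_or_eq_of_arc_parent hw with rfl | rfl
      · obtain ⟨rfl, rfl⟩ := (isPath_iff_of_isLeaf c.isLeaf_left).mp hl
        exact Or.inl ⟨rfl, rfl⟩
      · obtain ⟨rfl, rfl⟩ := (isPath_iff_of_isLeaf c.isLeaf_right).mp hl
        exact Or.inr ⟨rfl, rfl⟩
  · rintro (⟨rfl, rfl⟩ | ⟨rfl, rfl⟩)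
    · exact IsPath.cons c.arc_left (IsPath.nil _)
    · exact IsPath.cons c.arc_right (IsPath.nil _)

lemma m_parent {v : N.V} (hv : v ≠ p) : N.m p v = N.m xi v + N.m xj v := by
  have hij := c.left_ne_right
  rw [m_of_isLeaf c.isLeaf_left, m_of_isLeaf c.isLeaf_right]
  by_cases hvi : v = xi
  · subst hvi
    rw [m_eq_one_of_isPath_iff [v] fun l => by simp [c.isPath_parent_iff hv, hij]]
    simp [hij]
  by_cases hvj : v = xj
  · subst hvj
    rw [m_eq_one_of_isPath_iff [v] fun l => by simp [c.isPath_parent_iff hv, Ne.symm hij]]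
    simp [Ne.symm hij]
  rw [m_eq_zero_of_not_isPath fun l => by simp [c.isPath_parent_iff hv, hvi, hvj]]
  simp [hvi, hvj]

lemma mu_parent : N.mu p = N.mu xi + N.mu xj :=
  mu_eq_add_of_m_eq_add fun v hv => c.m_parent <| by
    rintro rfl
    exact hv.elim (not_isRetic_of_isTree c.isTree_parent) (not_isLeaf_of_isTree c.isTree_parent)

lemma ne_and_ne_iff_swap (x : N.V) :
    x ≠ xi ∧ x ≠ p ↔ Equiv.swap xj p x ≠ xi ∧ Equiv.swap xj p x ≠ xj := by
  have := c.left_ne_right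
  have := c.left_ne_parent
  have := c.right_ne_parent
  rw [Equiv.swap_apply_def]
  split_ifs <;> subst_vars <;> simp_all [eq_comm]

/-- `N^{(i,j)}` is the subgraph of `N` induced on the nodes other than `xi` and `xj`, with `xj`
moved into the place of `p`. -/
lemma arc_cherryReduce_iff (u w : (N.cherryReduce xi xj p).V) :
    (N.cherryReduce xi xj p).arc u w ↔ N.arc u.1 (Equiv.swap xj p w.1) := by
  show N.arc u.1 w.1 ∨ (N.arc u.1 p ∧ w.1 = xj) ↔ _
  by_cases hw : w.1 = xj
  · rw [hw, Equiv.swap_apply_left, eq_self, and_true]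
    exact or_iff_right fun h => u.2.2 (c.eq_of_arc_right h)
  · rw [Equiv.swap_apply_of_ne_of_ne hw w.2.2]
    simp [hw]

lemma indeg_cherryReduce (w : (N.cherryReduce xi xj p).V) :
    (N.cherryReduce xi xj p).indeg w = N.indeg w.1 := by
  have hw := (c.ne_and_ne_iff_swap w.1).mp w.2
  have hparent : ∀ {x}, N.arc x (Equiv.swap xj p w.1) → x ≠ xi ∧ x ≠ p := fun hx =>
    ⟨by rintro rfl; exact not_arc_of_isLeaf c.isLeaf_left _ hx,
     by rintro rfl; exact (c.eq_or_eq_of_arc_parent hx).elim hw.1 hw.2⟩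
  calc (N.cherryReduce xi xj p).indeg w = N.indeg (Equiv.swap xj p w.1) :=
        Nat.card_congr ((Equiv.subtypeEquivRight fun v => c.arc_cherryReduce_iff v w).trans
          (Equiv.subtypeSubtypeEquivSubtype hparent))
    _ = N.indeg w.1 := by
        by_cases hxj : w.1 = xj
        · rw [hxj, Equiv.swap_apply_left, c.isTree_parent.1, c.isLeaf_right.1]
        · rw [Equiv.swap_apply_of_ne_of_ne hxj w.2.2]

lemma outdeg_cherryReduce (u : (N.cherryReduce xi xj p).V) :
    (N.cherryReduce xi xj p).outdeg u = N.outdeg u.1 := by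
  have hchild : ∀ {x}, N.arc u.1 x → x ≠ xi ∧ x ≠ xj := fun hx =>
    ⟨by rintro rfl; exact u.2.2 (c.eq_of_arc_left hx),
     by rintro rfl; exact u.2.2 (c.eq_of_arc_right hx)⟩
  let e : (N.cherryReduce xi xj p).V ≃ {x : N.V // x ≠ xi ∧ x ≠ xj} :=
    (Equiv.swap xj p).subtypeEquiv c.ne_and_ne_iff_swap
  exact Nat.card_congr ((Equiv.subtypeEquivRight fun w => c.arc_cherryReduce_iff u w).trans
    ((e.subtypeEquiv fun _ => Iff.rfl).trans (Equiv.subtypeSubtypeEquivSubtype hchild)))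

lemma isLeaf_cherryReduce_iff (v : (N.cherryReduce xi xj p).V) :
    (N.cherryReduce xi xj p).isLeaf v ↔ N.isLeaf v.1 := by
  rw [isLeaf, isLeaf, c.indeg_cherryReduce, c.outdeg_cherryReduce]

lemma isTree_cherryReduce_iff (v : (N.cherryReduce xi xj p).V) :
    (N.cherryReduce xi xj p).isTree v ↔ N.isTree v.1 := by
  rw [isTree, isTree, c.indeg_cherryReduce, c.outdeg_cherryReduce]

lemma isRetic_cherryReduce_iff (v : (N.cherryReduce xi xj p).V) :
    (N.cherryReduce xi xj p).isRetic v ↔ N.isRetic v.1 := by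
  rw [isRetic, isRetic, c.indeg_cherryReduce, c.outdeg_cherryReduce]

lemma isVT_cherryReduce_iff (v : (N.cherryReduce xi xj p).V) :
    (N.cherryReduce xi xj p).isVT v ↔ N.isVT v.1 := by
  rw [isVT, isVT, c.isLeaf_cherryReduce_iff, c.isTree_cherryReduce_iff]

lemma ne_left_of_isPath {w b : N.V} {l : List N.V} (hl : N.IsPath w b l) (hb : b ≠ xi) :
    w ≠ xi := by
  rintro rfl
  exact hb ((isPath_iff_of_isLeaf c.isLeaf_left).mp hl).1

lemma isPath_insertBefore {u w : (N.cherryReduce xi xj p).V}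
    {l : List (N.cherryReduce xi xj p).V} (hl : (N.cherryReduce xi xj p).IsPath u w l) :
    N.IsPath u.1 w.1 (insertBefore xj p (l.map Subtype.val)) := by
  induction hl with
  | nil u => exact IsPath.nil u.1
  | @cons a b w l hab _ ih =>
    rw [c.arc_cherryReduce_iff] at hab
    show N.IsPath a.1 w.1 (insertBefore xj p (b.1 :: l.map Subtype.val))
    rw [insertBefore_cons]
    split_ifs with hb
    · rw [hb, Equiv.swap_apply_left] at hab
      exact IsPath.cons hab (IsPath.cons c.arc_right (hb ▸ ih))
    · rw [Equiv.swap_apply_of_ne_of_ne hb b.2.2] at hab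
      exact IsPath.cons hab ih

lemma isPath_filterSubtype {a b : N.V} {l : List N.V} (hl : N.IsPath a b l)
    (ha : a ≠ xi ∧ a ≠ p) (hb : b ≠ xi ∧ b ≠ p) :
    (N.cherryReduce xi xj p).IsPath ⟨a, ha⟩ ⟨b, hb⟩ (filterSubtype _ l) := by
  induction hl with
  | nil => exact IsPath.nil _
  | @cons a w b l haw hwb ih =>
    rw [filterSubtype_cons]
    split_ifs with hw
    · exact IsPath.cons (Or.inl haw) (ih hw hb)
    · obtain rfl : w = p := by simpa [c.ne_left_of_isPath hwb hb.1] using hw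
      obtain ⟨rfl, rfl⟩ : b = xj ∧ l = [xj] := by
        simpa [hb.1] using (c.isPath_parent_iff hb.2).mp hwb
      rw [filterSubtype_cons, dif_pos hb]
      exact IsPath.cons (Or.inr ⟨haw, rfl⟩) (IsPath.nil _)

lemma insertBefore_filterSubtype {a b : N.V} {l : List N.V} (hl : N.IsPath a b l)
    (ha : a ≠ p) (hb : b ≠ xi ∧ b ≠ p) :
    insertBefore xj p ((filterSubtype (fun v => v ≠ xi ∧ v ≠ p) l).map Subtype.val) = l := by
  induction hl with
  | nil => rfl
  | @cons a w b l haw hwb ih =>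
    rw [filterSubtype_cons]
    split_ifs with hw
    · have hwj : w ≠ xj := by rintro rfl; exact ha (c.eq_of_arc_right haw)
      rw [List.map_cons, insertBefore_cons, if_neg hwj, ih hw.2 hb]
    · obtain rfl : w = p := by simpa [c.ne_left_of_isPath hwb hb.1] using hw
      obtain ⟨rfl, rfl⟩ : b = xj ∧ l = [xj] := by
        simpa [hb.1] using (c.isPath_parent_iff hb.2).mp hwb
      rw [filterSubtype_cons, dif_pos hb, List.map_cons, insertBefore_cons, if_pos rfl]
      rfl

lemma m_cherryReduce (u v : (N.cherryReduce xi xj p).V) :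
    (N.cherryReduce xi xj p).m u v = N.m u.1 v.1 :=
  Nat.card_congr
    { toFun := fun l => ⟨insertBefore xj p (l.1.map Subtype.val), c.isPath_insertBefore l.2⟩
      invFun := fun l => ⟨filterSubtype _ l.1, c.isPath_filterSubtype l.2 u.2 v.2⟩
      left_inv := fun l => Subtype.ext <|
        filterSubtype_insertBefore_map_val ⟨c.left_ne_right.symm, c.right_ne_parent⟩
          (fun h => h.2 rfl) l.1
      right_inv := fun l => Subtype.ext (c.insertBefore_filterSubtype l.2 u.2.2 v.2) }

lemma sum_m_cherryReduce (P : N.V → Prop) [DecidablePred P] (hxi : ¬P xi) (hp : ¬P p)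
    (P' : (N.cherryReduce xi xj p).V → Prop) [DecidablePred P'] (hP : ∀ v, P' v ↔ P v.1)
    (u : (N.cherryReduce xi xj p).V) :
    ∑ v ∈ Finset.univ.filter P', (N.cherryReduce xi xj p).m u v =
      ∑ v ∈ Finset.univ.filter P, N.m u.1 v := by
  have hmap : Finset.univ.filter P =
      (Finset.univ.filter P').map (N.cherryReduceEmbedding xi xj p) := by
    ext x
    simp only [Finset.mem_filter, Finset.mem_univ, true_and, Finset.mem_map,
      cherryReduceEmbedding_apply, hP]
    constructor
    · intro hx
      exact ⟨⟨x, fun h => hxi (h ▸ hx), fun h => hp (h ▸ hx)⟩, hx, rfl⟩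
    · rintro ⟨v, hv, rfl⟩
      exact hv
  rw [hmap, Finset.sum_map]
  exact Finset.sum_congr rfl fun v _ => c.m_cherryReduce u v

open Classical in
lemma mu_cherryReduce (hN : N.Valid) {i : Fin (n + 1)} (hi : N.label xi = i)
    (u : (N.cherryReduce xi xj p).V) :
    (N.cherryReduce xi xj p).mu u = fun k => if k = i then 0 else N.mu u.1 k := by
  funext k
  by_cases hki : k = i
  · subst hki
    rw [if_pos rfl, mu, if_neg (hN.ne_zero_of_label_eq c.isLeaf_left hi)]
    refine Finset.sum_eq_zero fun v hv => absurd ?_ v.2.1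
    obtain ⟨hv, hvi⟩ := (Finset.mem_filter.mp hv).2
    exact hN.eq_of_label_eq ((c.isLeaf_cherryReduce_iff v).mp hv) c.isLeaf_left
      (hvi.trans hi.symm)
  · rw [if_neg hki, mu, mu]
    split_ifs
    · exact c.sum_m_cherryReduce _ (not_isRetic_of_isLeaf c.isLeaf_left)
        (not_isRetic_of_isTree c.isTree_parent) _ c.isRetic_cherryReduce_iff u
    · refine c.sum_m_cherryReduce (fun v => N.isLeaf v ∧ N.label v = k)
        (fun h => hki (Fin.ext (h.2.symm.trans hi)))
        (fun h => not_isLeaf_of_isTree c.isTree_parent h.1) _ (fun v => ?_) u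
      rw [c.isLeaf_cherryReduce_iff]
      rfl

open Classical in
lemma muRep_cherryReduce {g : N.V → Fin (n + 1) → ℕ}
    (hg : ∀ u, (N.cherryReduce xi xj p).mu u = g u.1) :
    (N.cherryReduce xi xj p).muRep =
      (((Finset.univ.filter N.isVT).erase xi).erase p).val.map g := by
  have hmap : (Finset.univ.filter (N.cherryReduce xi xj p).isVT).map
      (N.cherryReduceEmbedding xi xj p) = ((Finset.univ.filter N.isVT).erase xi).erase p := by
    ext x
    simp only [Finset.mem_map, Finset.mem_filter, Finset.mem_univ, true_and,
      cherryReduceEmbedding_apply, Finset.mem_erase, c.isVT_cherryReduce_iff]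
    constructor
    · rintro ⟨v, hv, rfl⟩
      exact ⟨v.2.2, v.2.1, hv⟩
    · rintro ⟨hxp, hxi, hx⟩
      exact ⟨⟨x, hxi, hxp⟩, hx, rfl⟩
  rw [← hmap, Finset.map_val, Multiset.map_map, muRep]
  exact Multiset.map_congr rfl fun u _ => hg u

end IsCherryTriple

/-- for a cherry `(i,j)`, every node of `N` other than the leaf
`xi` and the common parent `p` survives in `N^{(i,j)}` with the same μ-vector
except that the `i`-th coordinate becomes `0`; hence `𝛍(N^{(i,j)}) = 𝛍(N)^{(i,j)}`. -/
theorem stmt10 {n : ℕ} (N : BPN n) (hN : N.Valid) (i j : Fin (n + 1))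
    (xi xj p : N.V) (h : N.IsCherry i j xi xj p) :
    (∀ (u : N.V) (hu : u ≠ xi ∧ u ≠ p),
      (∀ k : Fin (n + 1), k ≠ i → (N.cherryReduce xi xj p).mu ⟨u, hu⟩ k = N.mu u k) ∧
      (N.cherryReduce xi xj p).mu ⟨u, hu⟩ i = 0) ∧
    (N.cherryReduce xi xj p).muRep = cherryRed i j N.muRep := by
  have c := h.isCherryTriple hN
  obtain ⟨lxi, hi, lxj, hj, hne, -, -⟩ := h
  have hij : i ≠ j := fun hij => hne (hN.eq_of_label_eq lxi lxj (by rw [hi, hj, hij]))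
  have hmu := c.mu_cherryReduce hN hi
  have hmu_xi : N.mu xi = delta {i} := mu_of_isLeaf lxi (hN.ne_zero_of_label_eq lxi hi) hi
  have hmu_p : N.mu p = delta {i, j} := by
    rw [c.mu_parent, hmu_xi, mu_of_isLeaf lxj (hN.ne_zero_of_label_eq lxj hj) hj, delta_pair hij]
  refine ⟨fun u hu => ⟨fun k hk => (congrFun (hmu ⟨u, hu⟩) k).trans (if_neg hk),
    (congrFun (hmu ⟨u, hu⟩) i).trans (if_pos rfl)⟩, ?_⟩
  rw [c.muRep_cherryReduce (g := fun u k => if k = i then 0 else N.mu u k) hmu,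
    N.muRep_eq_cons_cons (Or.inl lxi) (Or.inr c.isTree_parent) c.left_ne_parent, hmu_xi, hmu_p,
    cherryRed, Multiset.erase_cons_head, Multiset.erase_cons_head, Multiset.map_map]
  rfl

end BPN
end

section
/- Let N be a binary phylogenetic network and (i,j) a reticulated-cherry of N with p, q the parents of i, j respectively. Then for every tree node u of N other than q, the extended μ-vector of u in the reduced network N^{(i,j)} satisfies μ^{N^{(i,j)}}_i(u) = μ^N_i(u) − μ^N_j(u), μ^{N^{(i,j)}}_0(u) = μ^N_0(u) − μ^N_i(u), and μ^{N^{(i,j)}}_k(u) = μ^N_k(u) for all k ∉ {0,i}. Hence 𝛍(N^{(i,j)}) = 𝛍(N)^{(i,j)}. -/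
open Relation

/-!
Let `r` be the other parent of `p` and `s` the parent of `q`. Every descendant of `p` or `q` lies
in `{p, q, xi, xj}`, so paths to any other node avoid `p` and `q` and are counted alike in `N` and
`N⁽ⁱʲ⁾`. In `N⁽ⁱʲ⁾` the leaf `xj` hangs below `s` and `xi` below `r`. In `N`,
`m(u, xj) = m(u, q) = m(u, s)` and `m(u, xi) = m(u, p) = m(u, q) + m(u, r)`; hence counts to `xj`
are unchanged and counts to `xi` drop by `m(u, xj)`. The only reticulation lost is `p`, counted
by `m(u, p) = μ_i(u)`. Finally `μ(q) = δ_{0,i,j}` and `q` is the only leaf or tree node lost,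
which gives `𝛍(N⁽ⁱʲ⁾) = 𝛍(N)^{(i,j)}`.
-/

section CardSubtype

variable {α : Type*} {P : α → Prop} {a : α}

lemma forall_iff_eq_of_card_subtype_eq_one (h : Nat.card {x // P x} = 1) (ha : P a) :
    ∀ z, P z ↔ z = a := by
  have := (Nat.card_eq_one_iff_unique.1 h).1
  exact fun z => ⟨fun hz => congrArg Subtype.val (Subsingleton.elim ⟨z, hz⟩ ⟨a, ha⟩),
    fun e => e ▸ ha⟩

lemma exists_forall_iff_of_card_subtype_eq_two (h : Nat.card {x // P x} = 2) (ha : P a) :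
    ∃ b ≠ a, ∀ z, P z ↔ z = a ∨ z = b := by
  obtain ⟨⟨b, hb⟩, hba, huniq⟩ := (Nat.card_eq_two_iff' ⟨a, ha⟩).1 h
  refine ⟨b, fun e => hba (Subtype.ext e), fun z => ⟨fun hz => ?_, ?_⟩⟩
  · by_cases hza : z = a
    · exact Or.inl hza
    · exact Or.inr (congrArg Subtype.val (huniq ⟨z, hz⟩ fun e => hza (congrArg Subtype.val e)))
  · rintro (rfl | rfl) <;> assumption

lemma not_of_card_subtype_eq_zero [Finite α] (h : Nat.card {x // P x} = 0) : ¬ P a :=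
  fun ha => (Finite.card_eq_zero_iff.1 h).false ⟨a, ha⟩

lemma card_subtype_eq_one_of_forall_iff_eq (h : ∀ z, P z ↔ z = a) : Nat.card {x // P x} = 1 := by
  rw [Nat.card_congr (Equiv.subtypeEquivRight h), Nat.card_unique]

lemma sum_filter_subtype_val [Fintype α] (P Q : α → Prop) [DecidablePred P] [DecidablePred Q]
    [Fintype {x // P x}] {β : Type*} [AddCommMonoid β] (f : α → β) :
    ∑ x : {x // P x} with Q x.1, f x.1 = ∑ a with Q a ∧ P a, f a := by
  refine Finset.sum_bij (fun x _ => x.1) ?_ (fun _ _ _ _ => Subtype.ext) ?_ fun _ _ => rfl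
  · intro x hx
    simpa using ⟨(Finset.mem_filter.1 hx).2, x.2⟩
  · intro a ha
    obtain ⟨hQ, hP⟩ := (Finset.mem_filter.1 ha).2
    exact ⟨⟨a, hP⟩, by simpa using hQ, rfl⟩

end CardSubtype

namespace BPN

variable {n : ℕ} {M : BPN n} {u v w x : M.V} {l : List M.V}

namespace IsPath

lemma reflTransGen (h : M.IsPath u v l) : ReflTransGen M.arc u v := by
  induction h with
  | nil => exact .refl
  | cons ha _ ih => exact .head ha ih

lemma reflTransGen_of_mem (h : M.IsPath u v l) (hx : x ∈ l) : ReflTransGen M.arc u x := by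
  induction h with
  | nil => cases hx
  | cons ha _ ih =>
    rcases List.mem_cons.1 hx with rfl | hx
    · exact .single ha
    · exact .head ha (ih hx)

lemma right_unique (hv : M.IsPath u v l) (hw : M.IsPath u w l) : v = w := by
  induction hv with
  | nil => cases hw; rfl
  | cons _ _ ih => cases hw with | cons _ hw => exact ih hw

lemma mem_of_closed {S : Set M.V} (hS : ∀ a b, M.arc a b → a ∈ S → b ∈ S)
    (h : M.IsPath u v l) (hu : u ∈ S) : v ∈ S := by
  induction h with
  | nil => exact hu
  | cons ha _ ih => exact ih (hS _ _ ha hu)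

end IsPath

lemma isPath_append_singleton_iff :
    M.IsPath u v (l ++ [w]) ↔ v = w ∧ ∃ z, M.IsPath u z l ∧ M.arc z w := by
  induction l generalizing u with
  | nil =>
    constructor
    · rintro (_ | ⟨ha, hp⟩)
      cases hp
      exact ⟨rfl, u, .nil u, ha⟩
    · rintro ⟨rfl, z, hz, ha⟩
      cases hz
      exact .cons ha (.nil _)
  | cons c t ih =>
    constructor
    · rintro (_ | ⟨ha, hp⟩)
      obtain ⟨rfl, z, hz, haz⟩ := ih.1 hp
      exact ⟨rfl, z, .cons ha hz, haz⟩
    · rintro ⟨rfl, z, hz, haz⟩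
      cases hz with | cons ha hz => exact .cons ha (ih.2 ⟨rfl, z, hz, haz⟩)

lemma IsPath.exists_eq_append_singleton (h : M.IsPath u v l) (huv : u ≠ v) :
    ∃ l₁ z, l = l₁ ++ [v] ∧ M.IsPath u z l₁ ∧ M.arc z v := by
  obtain ⟨l₁, w, rfl⟩ := l.eq_nil_or_concat.resolve_left (by rintro rfl; cases h; exact huv rfl)
  rw [List.concat_eq_append] at h ⊢
  obtain ⟨rfl, z, hz, ha⟩ := isPath_append_singleton_iff.1 h
  exact ⟨l₁, z, rfl, hz, ha⟩

lemma IsPath.exists_arc_to_ne (h : M.IsPath u v l) (huv : u ≠ v) : ∃ z ≠ v, M.arc z v := by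
  induction h with
  | nil => exact absurd rfl huv
  | @cons a b w _ ha _ ih =>
    by_cases hbw : b = w
    · exact ⟨a, hbw ▸ huv, hbw ▸ ha⟩
    · exact ih hbw

lemma IsPath.exists_arc_from_ne (h : M.IsPath u v l) (huv : u ≠ v) : ∃ z ≠ u, M.arc u z := by
  induction h with
  | nil => exact absurd rfl huv
  | @cons a b w _ ha _ ih =>
    by_cases hab : b = a
    · obtain ⟨z, hz, hbz⟩ := ih (hab ▸ huv)
      exact ⟨z, hab ▸ hz, hab ▸ hbz⟩
    · exact ⟨b, hab, ha⟩

lemma m_eq_zero_of_forall_not_isPath (h : ∀ l, ¬ M.IsPath u v l) : M.m u v = 0 :=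
  have : IsEmpty {l // M.IsPath u v l} := ⟨fun l => h l.1 l.2⟩
  Nat.card_of_isEmpty

lemma m_eq_zero_of_closed {S : Set M.V} (hS : ∀ a b, M.arc a b → a ∈ S → b ∈ S)
    (hu : u ∈ S) (hv : v ∉ S) : M.m u v = 0 :=
  m_eq_zero_of_forall_not_isPath fun _ h => hv (h.mem_of_closed hS hu)

lemma m_eq_zero_of_forall_not_arc (huv : u ≠ v) (h : ∀ z, ¬ M.arc u z) : M.m u v = 0 :=
  m_eq_zero_of_closed (S := {u}) (fun _ b hab ha => absurd (ha ▸ hab) (h b)) rfl huv.symm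

lemma m_self_eq_one (h : ∀ z, M.arc u z → ¬ ReflTransGen M.arc z u) : M.m u u = 1 := by
  rw [m, Nat.card_eq_one_iff_exists]
  refine ⟨⟨[], .nil u⟩, ?_⟩
  rintro ⟨l, hl⟩
  cases hl with
  | nil => rfl
  | cons ha hp => exact absurd hp.reflTransGen (h _ ha)

/-- A loop at `u` can be traversed any number of times, so `m u v` is `Nat.card` of an infinite
type (junk value `0`), unless there is no path at all. -/
lemma m_eq_zero_of_arc_self (h : M.arc u u) : M.m u v = 0 := by
  by_cases hp : ∃ l, M.IsPath u v l
  · obtain ⟨l, hl⟩ := hp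
    have hrep (k : ℕ) : M.IsPath u v (List.replicate k u ++ l) := by
      induction k with
      | zero => exact hl
      | succ k ih => exact .cons h ih
    have : Infinite {l // M.IsPath u v l} :=
      Infinite.of_injective (fun k => ⟨_, hrep k⟩)
        fun a b hab => by simpa using congrArg (fun l => l.1.length) hab
    exact Nat.card_eq_zero_of_infinite
  · exact m_eq_zero_of_forall_not_isPath fun l hl => hp ⟨l, hl⟩

lemma m_eq_of_forall_arc_iff (huv : u ≠ v) (h : ∀ z, M.arc z v ↔ z = w) :
    M.m u v = M.m u w := by
  refine (Nat.card_eq_of_bijective (fun l : {l // M.IsPath u w l} =>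
    ⟨l.1 ++ [v], isPath_append_singleton_iff.2 ⟨rfl, w, l.2, (h w).2 rfl⟩⟩) ⟨?_, ?_⟩).symm
  · rintro ⟨l₁, _⟩ ⟨l₂, _⟩ he
    simpa using he
  · rintro ⟨l, hl⟩
    obtain ⟨l₁, z, rfl, hz, hzv⟩ := hl.exists_eq_append_singleton huv
    obtain rfl := (h z).1 hzv
    exact ⟨⟨l₁, hz⟩, rfl⟩

lemma m_eq_add_of_forall_arc_iff {a b : M.V} (huv : u ≠ v) (hab : a ≠ b)
    (h : ∀ z, M.arc z v ↔ z = a ∨ z = b) (hfa : Finite {l // M.IsPath u a l})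
    (hfb : Finite {l // M.IsPath u b l}) : M.m u v = M.m u a + M.m u b := by
  rw [m, m, m, ← Nat.card_sum]
  refine (Nat.card_eq_of_bijective (Sum.elim
    (fun l => ⟨l.1 ++ [v], isPath_append_singleton_iff.2 ⟨rfl, a, l.2, (h a).2 (.inl rfl)⟩⟩)
    (fun l => ⟨l.1 ++ [v], isPath_append_singleton_iff.2 ⟨rfl, b, l.2, (h b).2 (.inr rfl)⟩⟩))
    ⟨?_, ?_⟩).symm
  · rintro (⟨l₁, h₁⟩ | ⟨l₁, h₁⟩) (⟨l₂, h₂⟩ | ⟨l₂, h₂⟩) he <;>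
      simp only [Sum.elim_inl, Sum.elim_inr, Subtype.mk.injEq, List.append_left_inj] at he <;>
      subst he
    · rfl
    · exact absurd (h₁.right_unique h₂) hab
    · exact absurd (h₁.right_unique h₂) hab.symm
    · rfl
  · rintro ⟨l, hl⟩
    obtain ⟨l₁, z, rfl, hz, hzv⟩ := hl.exists_eq_append_singleton huv
    rcases (h z).1 hzv with rfl | rfl
    · exact ⟨.inl ⟨l₁, hz⟩, rfl⟩
    · exact ⟨.inr ⟨l₁, hz⟩, rfl⟩

namespace Valid

lemma eq_of_arc_of_reflTransGen (hM : M.Valid) (ha : M.arc u v) (h : ReflTransGen M.arc v u) :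
    u = v :=
  hM.1 u v (.single ha) h

/-- A loop is the only in-arc of a tree node and the only out-arc of a reticulation. -/
lemma not_arc_self (hM : M.Valid) (hin : ∃ z ≠ v, M.arc z v) (hout : ∃ z ≠ v, M.arc v z) :
    ¬ M.arc v v := by
  obtain ⟨a, hav, ha⟩ := hin
  obtain ⟨b, hbv, hb⟩ := hout
  intro hvv
  rcases hM.2.1 v with hv | hv | hv | hv
  · exact not_of_card_subtype_eq_zero hv.1 hvv
  · exact not_of_card_subtype_eq_zero hv.2 hvv
  · exact hav ((forall_iff_eq_of_card_subtype_eq_one hv.1 hvv a).1 ha)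
  · exact hbv ((forall_iff_eq_of_card_subtype_eq_one hv.2 hvv b).1 hb)

lemma nodup_of_isPath (hM : M.Valid) (h : M.IsPath u v l) (hu : ¬ M.arc u u)
    (hv : ¬ M.arc v v) : (u :: l).Nodup := by
  induction h with
  | nil => exact List.nodup_singleton _
  | @cons a b w l ha hp ih =>
    have hab : a ≠ b := fun e => hu (e ▸ ha)
    have hb : ¬ M.arc b b := by
      by_cases hbw : b = w
      · exact hbw ▸ hv
      · exact hM.not_arc_self ⟨a, hab, ha⟩ (hp.exists_arc_from_ne hbw)
    refine List.nodup_cons.2 ⟨fun hmem => hab ?_, ih hb hv⟩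
    rcases List.mem_cons.1 hmem with e | hmem
    · exact e
    · exact hM.eq_of_arc_of_reflTransGen ha (hp.reflTransGen_of_mem hmem)

lemma finite_paths (hM : M.Valid) (hu : ¬ M.arc u u) (hv : ¬ M.arc v v) :
    Finite {l // M.IsPath u v l} := by
  have hlen (l : {l // M.IsPath u v l}) : l.1.length ≤ Fintype.card M.V := by
    have := (hM.nodup_of_isPath l.2 hu hv).length_le_card
    simp only [List.length_cons] at this
    omega
  have : Finite {l : List M.V // l.length ≤ Fintype.card M.V} :=
    (List.finite_length_le M.V _).to_subtype
  exact Finite.of_injective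
    (fun l => (⟨l.1, hlen l⟩ : {l : List M.V // l.length ≤ Fintype.card M.V}))
    fun _ _ hab => Subtype.ext (by simpa using hab)

lemma finite_paths_of_arc (hM : M.Valid) (hu : ¬ M.arc u u) (hvw : M.arc v w) (hwv : w ≠ v) :
    Finite {l // M.IsPath u v l} := by
  by_cases hvv : M.arc v v
  · have : IsEmpty {l // M.IsPath u v l} := ⟨fun l => hM.not_arc_self
      (l.2.exists_arc_to_ne fun e => hu (e ▸ hvv)) ⟨w, hwv, hvw⟩ hvv⟩
    infer_instance
  · exact hM.finite_paths hu hvv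

lemma isLeaf_and_label_iff (hM : M.Valid) (hx : M.isLeaf x) {k : ℕ} (hk : M.label x = k) :
    ∀ v, M.isLeaf v ∧ M.label v = k ↔ v = x := fun v =>
  ⟨fun hv => hM.2.2.2.2.1 v x hv.1 hx (hv.2.trans hk.symm), fun e => e ▸ ⟨hx, hk⟩⟩

lemma label_ne_zero (hM : M.Valid) (hx : M.isLeaf x) {k : Fin (n + 1)} (hk : M.label x = k) :
    k ≠ 0 := by
  rintro rfl
  simpa [hk] using (hM.2.2.2.1 x hx).2.1

end Valid

lemma ne_of_isLeaf_of_isRetic (hu : M.isLeaf u) (hv : M.isRetic v) : u ≠ v :=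
  ne_of_apply_ne M.outdeg (by rw [hu.2, hv.2]; decide)

lemma ne_of_isLeaf_of_isTree (hu : M.isLeaf u) (hv : M.isTree v) : u ≠ v :=
  ne_of_apply_ne M.outdeg (by rw [hu.2, hv.2]; decide)

lemma ne_of_isTree_of_isRetic (hu : M.isTree u) (hv : M.isRetic v) : u ≠ v :=
  ne_of_apply_ne M.indeg (by rw [hu.1, hv.1]; decide)

open Classical in
lemma mu_eq_m_of_forall_iff {k : Fin (n + 1)} (hk : k ≠ 0)
    (hx : ∀ v, M.isLeaf v ∧ M.label v = k ↔ v = x) (u : M.V) : M.mu u k = M.m u x := by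
  rw [mu, if_neg hk]
  exact Finset.sum_eq_single_of_mem x (by simp [hx])
    fun v hv hvx => absurd ((hx v).1 (Finset.mem_filter.1 hv).2) hvx

lemma Valid.mu_eq_m (hM : M.Valid) (hx : M.isLeaf x) {k : Fin (n + 1)} (hk : M.label x = k)
    (u : M.V) : M.mu u k = M.m u x :=
  mu_eq_m_of_forall_iff (hM.label_ne_zero hx hk) (hM.isLeaf_and_label_iff hx hk) u

structure RetCherryNbhd (N : BPN n) (xi xj p q r s : N.V) : Prop where
  isLeaf_xi : N.isLeaf xi
  isLeaf_xj : N.isLeaf xj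
  isRetic_p : N.isRetic p
  isTree_q : N.isTree q
  xi_ne_xj : xi ≠ xj
  r_ne_q : r ≠ q
  child_xi : ∀ z, ¬ N.arc xi z
  child_xj : ∀ z, ¬ N.arc xj z
  child_p : ∀ z, N.arc p z ↔ z = xi
  child_q : ∀ z, N.arc q z ↔ z = p ∨ z = xj
  parent_xi : ∀ z, N.arc z xi ↔ z = p
  parent_xj : ∀ z, N.arc z xj ↔ z = q
  parent_p : ∀ z, N.arc z p ↔ z = q ∨ z = r
  parent_q : ∀ z, N.arc z q ↔ z = s

lemma IsRetCherry.exists_retCherryNbhd {N : BPN n} {i j : Fin (n + 1)} {xi xj p q : N.V}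
    (h : N.IsRetCherry i j xi xj p q) : ∃ r s, N.RetCherryNbhd xi xj p q r s := by
  obtain ⟨hxi, -, hxj, -, hne, hpxi, hqxj, hp, hq, hqp⟩ := h
  have child_xi (z : N.V) : ¬ N.arc xi z := not_of_card_subtype_eq_zero hxi.2
  have child_xj (z : N.V) : ¬ N.arc xj z := not_of_card_subtype_eq_zero hxj.2
  obtain ⟨b, -, child_q⟩ := exists_forall_iff_of_card_subtype_eq_two hq.2 hqp
  obtain rfl : xj = b :=
    ((child_q xj).1 hqxj).resolve_left fun e => child_xj xi (e ▸ hpxi)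
  obtain ⟨r, hrq, parent_p⟩ := exists_forall_iff_of_card_subtype_eq_two hp.1 hqp
  obtain ⟨⟨s, hsq⟩⟩ := (Nat.card_eq_one_iff_unique.1 hq.1).2
  exact ⟨r, s, hxi, hxj, hp, hq, hne, hrq, child_xi, child_xj,
    forall_iff_eq_of_card_subtype_eq_one hp.2 hpxi, child_q,
    forall_iff_eq_of_card_subtype_eq_one hxi.1 hpxi,
    forall_iff_eq_of_card_subtype_eq_one hxj.1 hqxj, parent_p,
    forall_iff_eq_of_card_subtype_eq_one hq.1 hsq⟩

namespace RetCherryNbhd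

variable {N : BPN n} {xi xj p q r s : N.V}

lemma arc_p_xi (c : N.RetCherryNbhd xi xj p q r s) : N.arc p xi := (c.child_p xi).2 rfl
lemma arc_q_xj (c : N.RetCherryNbhd xi xj p q r s) : N.arc q xj := (c.child_q xj).2 (.inr rfl)
lemma arc_q_p (c : N.RetCherryNbhd xi xj p q r s) : N.arc q p := (c.child_q p).2 (.inl rfl)
lemma arc_r_p (c : N.RetCherryNbhd xi xj p q r s) : N.arc r p := (c.parent_p r).2 (.inr rfl)
lemma arc_s_q (c : N.RetCherryNbhd xi xj p q r s) : N.arc s q := (c.parent_q s).2 rfl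

lemma p_ne_xi (c : N.RetCherryNbhd xi xj p q r s) : p ≠ xi :=
  fun e => c.child_xi xi (e ▸ c.arc_p_xi)
lemma q_ne_xj (c : N.RetCherryNbhd xi xj p q r s) : q ≠ xj :=
  fun e => c.child_xj p (e ▸ c.arc_q_p)
lemma p_ne_q (c : N.RetCherryNbhd xi xj p q r s) : p ≠ q :=
  fun e => c.xi_ne_xj ((c.child_p xj).1 (e ▸ c.arc_q_xj)).symm

lemma xi_ne (c : N.RetCherryNbhd xi xj p q r s) : xi ≠ p ∧ xi ≠ q :=
  ⟨c.p_ne_xi.symm, fun e => c.child_xi xj (e ▸ c.arc_q_xj)⟩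
lemma xj_ne (c : N.RetCherryNbhd xi xj p q r s) : xj ≠ p ∧ xj ≠ q :=
  ⟨fun e => c.child_xj xi (e ▸ c.arc_p_xi), c.q_ne_xj.symm⟩
lemma r_ne (c : N.RetCherryNbhd xi xj p q r s) : r ≠ p ∧ r ≠ q :=
  ⟨fun e => c.p_ne_xi ((c.child_p p).1 (e ▸ c.arc_r_p)), c.r_ne_q⟩
lemma s_ne (c : N.RetCherryNbhd xi xj p q r s) : s ≠ p ∧ s ≠ q :=
  ⟨fun e => c.xi_ne.2 ((c.child_p q).1 (e ▸ c.arc_s_q)).symm,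
    fun e => ((c.child_q q).1 (e ▸ c.arc_s_q)).elim c.p_ne_q.symm c.q_ne_xj⟩

lemma mem_of_arc_of_mem (c : N.RetCherryNbhd xi xj p q r s) :
    ∀ a b, N.arc a b → a ∈ ({p, q, xi, xj} : Set N.V) → b ∈ ({p, q, xi, xj} : Set N.V) := by
  simp only [Set.mem_insert_iff, Set.mem_singleton_iff]
  rintro a b hab (rfl | rfl | rfl | rfl)
  · exact .inr (.inr (.inl ((c.child_p b).1 hab)))
  · rcases (c.child_q b).1 hab with h | h <;> simp [h]
  · exact absurd hab (c.child_xi b)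
  · exact absurd hab (c.child_xj b)

lemma r_not_mem (c : N.RetCherryNbhd xi xj p q r s) : r ∉ ({p, q, xi, xj} : Set N.V) := by
  simp only [Set.mem_insert_iff, Set.mem_singleton_iff, not_or]
  exact ⟨c.r_ne.1, c.r_ne.2, fun e => c.child_xi p (e ▸ c.arc_r_p),
    fun e => c.child_xj p (e ▸ c.arc_r_p)⟩

lemma s_not_mem (c : N.RetCherryNbhd xi xj p q r s) : s ∉ ({p, q, xi, xj} : Set N.V) := by
  simp only [Set.mem_insert_iff, Set.mem_singleton_iff, not_or]
  exact ⟨c.s_ne.1, c.s_ne.2, fun e => c.child_xi q (e ▸ c.arc_s_q),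
    fun e => c.child_xj q (e ▸ c.arc_s_q)⟩

end RetCherryNbhd

section Reduce

variable {N : BPN n} {xi xj p q r s : N.V}

local notation "N⁽ⁱʲ⁾" => N.retCherryReduce xi xj p q

lemma not_arc_reduce_of_forall_not_arc {a : N⁽ⁱʲ⁾.V} (h : ∀ z, ¬ N.arc a.1 z) (b : N⁽ⁱʲ⁾.V) :
    ¬ N⁽ⁱʲ⁾.arc a b := by
  rintro (hb | ⟨hb, -⟩ | ⟨hb, -⟩) <;> exact h _ hb

lemma IsPath.of_reduce (hxi : ∀ z, ¬ N.arc xi z) (hxj : ∀ z, ¬ N.arc xj z) {a b : N⁽ⁱʲ⁾.V}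
    {l : List N⁽ⁱʲ⁾.V} (h : N⁽ⁱʲ⁾.IsPath a b l) (hb : b.1 ≠ xi ∧ b.1 ≠ xj) :
    N.IsPath a.1 b.1 (l.map Subtype.val) := by
  induction h with
  | nil => exact .nil _
  | @cons a b w l hab _ ih =>
    refine .cons ?_ (ih hb)
    rcases hab with hab | ⟨-, e⟩ | ⟨-, e⟩
    · exact hab
    · obtain ⟨z, -, hz⟩ := (ih hb).exists_arc_from_ne (e ▸ hb.1.symm)
      exact absurd (e ▸ hz) (hxi z)
    · obtain ⟨z, -, hz⟩ := (ih hb).exists_arc_from_ne (e ▸ hb.2.symm)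
      exact absurd (e ▸ hz) (hxj z)

namespace RetCherryNbhd

lemma exists_isPath_reduce (c : N.RetCherryNbhd xi xj p q r s) {u v : N.V} {l : List N.V}
    (h : N.IsPath u v l) (hv : v ∉ ({p, q, xi, xj} : Set N.V)) (hu : u ≠ p ∧ u ≠ q)
    (hv' : v ≠ p ∧ v ≠ q) :
    ∃ l' : List N⁽ⁱʲ⁾.V, N⁽ⁱʲ⁾.IsPath ⟨u, hu⟩ ⟨v, hv'⟩ l' ∧ l'.map Subtype.val = l := by
  induction h with
  | nil => exact ⟨[], .nil _, rfl⟩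
  | @cons a b w l hab hbw ih =>
    have hb : b ∉ ({p, q, xi, xj} : Set N.V) := fun hb =>
      hv (hbw.mem_of_closed c.mem_of_arc_of_mem hb)
    have hb' : b ≠ p ∧ b ≠ q := ⟨fun e => hb (.inl e), fun e => hb (.inr (.inl e))⟩
    obtain ⟨l', hl', rfl⟩ := ih hv hb' hv'
    exact ⟨⟨b, hb'⟩ :: l', .cons (.inl hab) hl', rfl⟩

lemma m_reduce_of_not_mem (c : N.RetCherryNbhd xi xj p q r s) (u : N⁽ⁱʲ⁾.V) {v : N⁽ⁱʲ⁾.V}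
    (hv : v.1 ∉ ({p, q, xi, xj} : Set N.V)) : N⁽ⁱʲ⁾.m u v = N.m u.1 v.1 := by
  have hv' : v.1 ≠ xi ∧ v.1 ≠ xj := ⟨fun e => hv (by simp [e]), fun e => hv (by simp [e])⟩
  refine Nat.card_eq_of_bijective (fun l => ⟨l.1.map Subtype.val,
    l.2.of_reduce c.child_xi c.child_xj hv'⟩) ⟨?_, ?_⟩
  · rintro ⟨l₁, _⟩ ⟨l₂, _⟩ he
    exact Subtype.ext (List.map_injective_iff.2 Subtype.val_injective (congrArg Subtype.val he))
  · rintro ⟨l, hl⟩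
    obtain ⟨l', hl', rfl⟩ := c.exists_isPath_reduce hl hv u.2 v.2
    exact ⟨⟨l', hl'⟩, rfl⟩

lemma parent_xi_reduce (c : N.RetCherryNbhd xi xj p q r s) (z : N⁽ⁱʲ⁾.V) :
    N⁽ⁱʲ⁾.arc z ⟨xi, c.xi_ne⟩ ↔ z = ⟨r, c.r_ne⟩ := by
  obtain ⟨z, hzp, hzq⟩ := z
  simp [retCherryReduce, c.parent_xi, c.parent_p, hzp, hzq, c.xi_ne_xj]

lemma parent_xj_reduce (c : N.RetCherryNbhd xi xj p q r s) (z : N⁽ⁱʲ⁾.V) :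
    N⁽ⁱʲ⁾.arc z ⟨xj, c.xj_ne⟩ ↔ z = ⟨s, c.s_ne⟩ := by
  obtain ⟨z, hzp, hzq⟩ := z
  simp [retCherryReduce, c.parent_xj, c.parent_q, hzq, c.xi_ne_xj.symm]

lemma m_reduce_xj (c : N.RetCherryNbhd xi xj p q r s) (u : N⁽ⁱʲ⁾.V) :
    N⁽ⁱʲ⁾.m u ⟨xj, c.xj_ne⟩ = N.m u.1 xj := by
  by_cases hu : u.1 = xj
  · obtain rfl : u = ⟨xj, c.xj_ne⟩ := Subtype.ext hu
    rw [m_self_eq_one fun z hz =>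
        absurd hz (not_arc_reduce_of_forall_not_arc (a := ⟨xj, c.xj_ne⟩) c.child_xj z),
      m_self_eq_one fun z hz => absurd hz (c.child_xj z)]
  · calc N⁽ⁱʲ⁾.m u ⟨xj, c.xj_ne⟩
        = N⁽ⁱʲ⁾.m u ⟨s, c.s_ne⟩ := m_eq_of_forall_arc_iff (fun e => hu (congrArg Subtype.val e))
          c.parent_xj_reduce
      _ = N.m u.1 s := c.m_reduce_of_not_mem u c.s_not_mem
      _ = N.m u.1 q := (m_eq_of_forall_arc_iff u.2.2 c.parent_q).symm
      _ = N.m u.1 xj := (m_eq_of_forall_arc_iff hu c.parent_xj).symm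

lemma m_reduce_of_ne_xi (c : N.RetCherryNbhd xi xj p q r s) (u : N⁽ⁱʲ⁾.V) {v : N⁽ⁱʲ⁾.V}
    (hv : v.1 ≠ xi) : N⁽ⁱʲ⁾.m u v = N.m u.1 v.1 := by
  by_cases hvj : v.1 = xj
  · obtain rfl : v = ⟨xj, c.xj_ne⟩ := Subtype.ext hvj
    exact c.m_reduce_xj u
  · exact c.m_reduce_of_not_mem u (by simp [v.2.1, v.2.2, hv, hvj])

lemma m_p_eq_add (hN : N.Valid) (c : N.RetCherryNbhd xi xj p q r s) {u : N.V} (hup : u ≠ p)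
    (hu : ¬ N.arc u u) : N.m u p = N.m u q + N.m u r :=
  m_eq_add_of_forall_arc_iff hup c.r_ne_q.symm c.parent_p
    (hN.finite_paths_of_arc hu c.arc_q_xj c.q_ne_xj.symm)
    (hN.finite_paths_of_arc hu c.arc_r_p c.r_ne.1.symm)

lemma m_reduce_xi (hN : N.Valid) (c : N.RetCherryNbhd xi xj p q r s) (u : N⁽ⁱʲ⁾.V) :
    N⁽ⁱʲ⁾.m u ⟨xi, c.xi_ne⟩ = N.m u.1 xi - N.m u.1 xj := by
  by_cases huu : N.arc u.1 u.1
  · rw [m_eq_zero_of_arc_self huu, m_eq_zero_of_arc_self huu]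
    exact m_eq_zero_of_arc_self (M := N⁽ⁱʲ⁾) (.inl huu)
  by_cases hxi : u.1 = xi
  · obtain rfl : u = ⟨xi, c.xi_ne⟩ := Subtype.ext hxi
    rw [m_self_eq_one fun z hz =>
        absurd hz (not_arc_reduce_of_forall_not_arc (a := ⟨xi, c.xi_ne⟩) c.child_xi z),
      m_self_eq_one fun z hz => absurd hz (c.child_xi z),
      m_eq_zero_of_forall_not_arc c.xi_ne_xj c.child_xi]
  by_cases hxj : u.1 = xj
  · obtain rfl : u = ⟨xj, c.xj_ne⟩ := Subtype.ext hxj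
    rw [m_eq_zero_of_forall_not_arc (fun e => c.xi_ne_xj (congrArg Subtype.val e).symm)
      (not_arc_reduce_of_forall_not_arc (a := ⟨xj, c.xj_ne⟩) c.child_xj),
      m_eq_zero_of_forall_not_arc c.xi_ne_xj.symm c.child_xj]
    simp -- `0 = 0 - 1` in `ℕ`
  have hreduce : N⁽ⁱʲ⁾.m u ⟨xi, c.xi_ne⟩ = N.m u.1 r :=
    (m_eq_of_forall_arc_iff (fun e => hxi (congrArg Subtype.val e)) c.parent_xi_reduce).trans
      (c.m_reduce_of_not_mem _ c.r_not_mem)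
  rw [hreduce, m_eq_of_forall_arc_iff hxi c.parent_xi, m_eq_of_forall_arc_iff hxj c.parent_xj,
    c.m_p_eq_add hN u.2.1 huu, Nat.add_sub_cancel_left]

lemma indeg_reduce (c : N.RetCherryNbhd xi xj p q r s) (v : N⁽ⁱʲ⁾.V) :
    N⁽ⁱʲ⁾.indeg v = N.indeg v.1 := by
  by_cases hxi : v.1 = xi
  · obtain rfl : v = ⟨xi, c.xi_ne⟩ := Subtype.ext hxi
    exact (card_subtype_eq_one_of_forall_iff_eq c.parent_xi_reduce).trans c.isLeaf_xi.1.symm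
  by_cases hxj : v.1 = xj
  · obtain rfl : v = ⟨xj, c.xj_ne⟩ := Subtype.ext hxj
    exact (card_subtype_eq_one_of_forall_iff_eq c.parent_xj_reduce).trans c.isLeaf_xj.1.symm
  have harc (z : N⁽ⁱʲ⁾.V) : N⁽ⁱʲ⁾.arc z v ↔ N.arc z.1 v.1 := by
    simp [retCherryReduce, hxi, hxj]
  have hpq {z : N.V} (hz : N.arc z v.1) : z ≠ p ∧ z ≠ q :=
    ⟨fun e => hxi ((c.child_p _).1 (e ▸ hz)),
      fun e => ((c.child_q _).1 (e ▸ hz)).elim v.2.1 hxj⟩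
  exact Nat.card_congr ((Equiv.subtypeEquivRight harc).trans
    (Equiv.subtypeSubtypeEquivSubtype hpq))

lemma outdeg_reduce (c : N.RetCherryNbhd xi xj p q r s) (a : N⁽ⁱʲ⁾.V) :
    N⁽ⁱʲ⁾.outdeg a = N.outdeg a.1 := by
  -- `τ` maps the children of `a` in `N⁽ⁱʲ⁾` onto its children in `N`.
  let τ := Equiv.swap xi p * Equiv.swap xj q
  have hτ_xi : τ xi = p := by
    rw [Equiv.Perm.mul_apply, Equiv.swap_apply_of_ne_of_ne c.xi_ne_xj c.xi_ne.2,
      Equiv.swap_apply_left]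
  have hτ_xj : τ xj = q := by
    rw [Equiv.Perm.mul_apply, Equiv.swap_apply_left,
      Equiv.swap_apply_of_ne_of_ne c.xi_ne.2.symm c.p_ne_q.symm]
  have hτ_p : τ p = xi := by
    rw [Equiv.Perm.mul_apply, Equiv.swap_apply_of_ne_of_ne c.xj_ne.1.symm c.p_ne_q,
      Equiv.swap_apply_right]
  have hτ_q : τ q = xj := by
    rw [Equiv.Perm.mul_apply, Equiv.swap_apply_right,
      Equiv.swap_apply_of_ne_of_ne c.xi_ne_xj.symm c.xj_ne.1]
  have hτ {v : N.V} (hp : v ≠ p) (hq : v ≠ q) (hxi : v ≠ xi) (hxj : v ≠ xj) : τ v = v := by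
    rw [Equiv.Perm.mul_apply, Equiv.swap_apply_of_ne_of_ne hxj hq,
      Equiv.swap_apply_of_ne_of_ne hxi hp]
  have ha_xi : ¬ N.arc a.1 xi := fun h => a.2.1 ((c.parent_xi _).1 h)
  have ha_xj : ¬ N.arc a.1 xj := fun h => a.2.2 ((c.parent_xj _).1 h)
  have harc (b : N⁽ⁱʲ⁾.V) : N⁽ⁱʲ⁾.arc a b ↔ N.arc a.1 (τ b.1) := by
    obtain ⟨b, hbp, hbq⟩ := b
    by_cases hbi : b = xi
    · subst hbi
      simp [retCherryReduce, hτ_xi, ha_xi, c.xi_ne_xj]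
    by_cases hbj : b = xj
    · subst hbj
      simp [retCherryReduce, hτ_xj, ha_xj, c.xi_ne_xj.symm]
    simp [retCherryReduce, hτ hbp hbq hbi hbj, hbi, hbj]
  have hpq {v : N.V} (hv : N.arc a.1 (τ v)) : v ≠ p ∧ v ≠ q :=
    ⟨fun e => ha_xi (hτ_p ▸ e ▸ hv), fun e => ha_xj (hτ_q ▸ e ▸ hv)⟩
  exact Nat.card_congr ((Equiv.subtypeEquivRight harc).trans
    ((Equiv.subtypeSubtypeEquivSubtype hpq).trans (τ.subtypeEquiv fun _ => Iff.rfl)))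

lemma isLeaf_reduce (c : N.RetCherryNbhd xi xj p q r s) (v : N⁽ⁱʲ⁾.V) :
    N⁽ⁱʲ⁾.isLeaf v ↔ N.isLeaf v.1 := by
  rw [isLeaf, isLeaf, c.indeg_reduce, c.outdeg_reduce]

lemma isTree_reduce (c : N.RetCherryNbhd xi xj p q r s) (v : N⁽ⁱʲ⁾.V) :
    N⁽ⁱʲ⁾.isTree v ↔ N.isTree v.1 := by
  rw [isTree, isTree, c.indeg_reduce, c.outdeg_reduce]

lemma isRetic_reduce (c : N.RetCherryNbhd xi xj p q r s) (v : N⁽ⁱʲ⁾.V) :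
    N⁽ⁱʲ⁾.isRetic v ↔ N.isRetic v.1 := by
  rw [isRetic, isRetic, c.indeg_reduce, c.outdeg_reduce]

lemma isVT_reduce (c : N.RetCherryNbhd xi xj p q r s) (v : N⁽ⁱʲ⁾.V) :
    N⁽ⁱʲ⁾.isVT v ↔ N.isVT v.1 := by
  rw [isVT, isVT, c.isLeaf_reduce, c.isTree_reduce]

variable {i j k : Fin (n + 1)}

open Classical in
lemma mu_reduce_of_ne (c : N.RetCherryNbhd xi xj p q r s) (hi : N.label xi = i) (hk0 : k ≠ 0)
    (hki : k ≠ i) (u : N⁽ⁱʲ⁾.V) : N⁽ⁱʲ⁾.mu u k = N.mu u.1 k := by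
  have hne_xi {v : N.V} (hv : N.label v = k) : v ≠ xi := fun e =>
    hki (Fin.ext ((e ▸ hv).symm.trans hi))
  simp only [mu, if_neg hk0]
  calc ∑ x : N⁽ⁱʲ⁾.V with N⁽ⁱʲ⁾.isLeaf x ∧ N⁽ⁱʲ⁾.label x = k, N⁽ⁱʲ⁾.m u x
      = ∑ x : N⁽ⁱʲ⁾.V with N.isLeaf x.1 ∧ N.label x.1 = k, N.m u.1 x.1 :=
        Finset.sum_congr (Finset.filter_congr fun x _ => and_congr_left' (c.isLeaf_reduce x))
          fun x hx => c.m_reduce_of_ne_xi u (hne_xi (Finset.mem_filter.1 hx).2.2)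
    _ = ∑ v with (N.isLeaf v ∧ N.label v = k) ∧ v ≠ p ∧ v ≠ q, N.m u.1 v :=
        sum_filter_subtype_val (fun v => v ≠ p ∧ v ≠ q) (fun v => N.isLeaf v ∧ N.label v = k) _
    _ = ∑ v with N.isLeaf v ∧ N.label v = k, N.m u.1 v :=
        Finset.sum_congr (Finset.filter_congr fun v _ => and_iff_left_of_imp fun hv =>
          ⟨ne_of_isLeaf_of_isRetic hv.1 c.isRetic_p, ne_of_isLeaf_of_isTree hv.1 c.isTree_q⟩)
          fun _ _ => rfl

lemma mu_reduce_i (hN : N.Valid) (c : N.RetCherryNbhd xi xj p q r s) (hi : N.label xi = i)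
    (hj : N.label xj = j) (u : N⁽ⁱʲ⁾.V) : N⁽ⁱʲ⁾.mu u i = N.mu u.1 i - N.mu u.1 j := by
  have hxi (v : N⁽ⁱʲ⁾.V) : N⁽ⁱʲ⁾.isLeaf v ∧ N⁽ⁱʲ⁾.label v = i ↔ v = ⟨xi, c.xi_ne⟩ :=
    (and_congr_left' (c.isLeaf_reduce v)).trans <| (hN.isLeaf_and_label_iff c.isLeaf_xi hi v.1).trans
      (Subtype.ext_iff (a2 := ⟨xi, c.xi_ne⟩)).symm
  rw [mu_eq_m_of_forall_iff (hN.label_ne_zero c.isLeaf_xi hi) hxi, hN.mu_eq_m c.isLeaf_xi hi,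
    hN.mu_eq_m c.isLeaf_xj hj, c.m_reduce_xi hN]

open Classical in
lemma mu_reduce_zero (hN : N.Valid) (c : N.RetCherryNbhd xi xj p q r s) (hi : N.label xi = i)
    (u : N⁽ⁱʲ⁾.V) : N⁽ⁱʲ⁾.mu u 0 = N.mu u.1 0 - N.mu u.1 i := by
  rw [hN.mu_eq_m c.isLeaf_xi hi]
  simp only [mu, ↓reduceIte]
  have hsum : ∑ x : N⁽ⁱʲ⁾.V with N⁽ⁱʲ⁾.isRetic x, N⁽ⁱʲ⁾.m u x
      = ∑ v ∈ (Finset.univ.filter fun v => N.isRetic v).erase p, N.m u.1 v := calc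
    _ = ∑ x : N⁽ⁱʲ⁾.V with N.isRetic x.1, N.m u.1 x.1 :=
        Finset.sum_congr (Finset.filter_congr fun x _ => c.isRetic_reduce x) fun x hx =>
          c.m_reduce_of_ne_xi u
            (ne_of_isLeaf_of_isRetic c.isLeaf_xi (Finset.mem_filter.1 hx).2).symm
    _ = ∑ v with N.isRetic v ∧ v ≠ p ∧ v ≠ q, N.m u.1 v :=
        sum_filter_subtype_val (fun v => v ≠ p ∧ v ≠ q) (fun v => N.isRetic v) _
    _ = _ := by
        congr 1
        ext v
        simp only [Finset.mem_filter, Finset.mem_univ, true_and, Finset.mem_erase]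
        exact ⟨fun hv => ⟨hv.2.1, hv.1⟩, fun hv =>
          ⟨hv.2, hv.1, (ne_of_isTree_of_isRetic c.isTree_q hv.2).symm⟩⟩
  have hp : p ∈ Finset.univ.filter fun v => N.isRetic v := by simpa using c.isRetic_p
  rw [hsum, ← Finset.add_sum_erase _ _ hp]
  by_cases hu : u.1 = xi
  · -- both sides vanish, the right one being `(0 + 0) - 1` in `ℕ`
    have hzero : ∑ v ∈ (Finset.univ.filter fun v => N.isRetic v).erase p, N.m u.1 v = 0 :=
      Finset.sum_eq_zero fun v hv => hu ▸ m_eq_zero_of_forall_not_arc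
        (ne_of_isLeaf_of_isRetic c.isLeaf_xi (by simpa using (Finset.mem_erase.1 hv).2))
        c.child_xi
    rw [hzero, hu, m_eq_zero_of_forall_not_arc c.p_ne_xi.symm c.child_xi]
    simp
  · rw [m_eq_of_forall_arc_iff hu c.parent_xi, Nat.add_sub_cancel_left]

open Classical in
lemma mu_q_eq_delta (hN : N.Valid) (c : N.RetCherryNbhd xi xj p q r s) (hi : N.label xi = i)
    (hj : N.label xj = j) : N.mu q = delta {0, i, j} := by
  have hqS : q ∈ ({p, q, xi, xj} : Set N.V) := by simp
  have hnot {v : N.V} (hp : v ≠ p) (hq : v ≠ q) (hxi : v ≠ xi) (hxj : v ≠ xj) :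
      N.m q v = 0 :=
    m_eq_zero_of_closed c.mem_of_arc_of_mem hqS (by simp [hp, hq, hxi, hxj])
  have hqq : ¬ N.arc q q := fun h => ((c.child_q q).1 h).elim c.p_ne_q.symm c.q_ne_xj
  have m_qq : N.m q q = 1 := m_self_eq_one fun z hz hzq => by
    obtain rfl := hN.eq_of_arc_of_reflTransGen hz hzq
    exact hqq hz
  have m_qp : N.m q p = 1 := by
    rw [c.m_p_eq_add hN c.p_ne_q.symm hqq, m_qq,
      m_eq_zero_of_closed c.mem_of_arc_of_mem hqS c.r_not_mem]
  funext k
  simp only [delta, Finset.mem_insert, Finset.mem_singleton]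
  rcases eq_or_ne k 0 with rfl | hk0
  · rw [if_pos (.inl rfl)]
    simp only [mu, ↓reduceIte]
    rw [← m_qp]
    refine Finset.sum_eq_single_of_mem p (by simpa using c.isRetic_p) fun h hh hhp => ?_
    have hh : N.isRetic h := (Finset.mem_filter.1 hh).2
    exact hnot hhp (ne_of_isTree_of_isRetic c.isTree_q hh).symm
      (ne_of_isLeaf_of_isRetic c.isLeaf_xi hh).symm (ne_of_isLeaf_of_isRetic c.isLeaf_xj hh).symm
  rcases eq_or_ne k i with rfl | hki
  · rw [if_pos (.inr (.inl rfl)), hN.mu_eq_m c.isLeaf_xi hi,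
      m_eq_of_forall_arc_iff c.xi_ne.2.symm c.parent_xi, m_qp]
  rcases eq_or_ne k j with rfl | hkj
  · rw [if_pos (.inr (.inr rfl)), hN.mu_eq_m c.isLeaf_xj hj,
      m_eq_of_forall_arc_iff c.q_ne_xj c.parent_xj, m_qq]
  rw [if_neg (by simp [hk0, hki, hkj])]
  simp only [mu, if_neg hk0]
  refine Finset.sum_eq_zero fun v hv => ?_
  obtain ⟨hv, hvk⟩ := (Finset.mem_filter.1 hv).2
  exact hnot (ne_of_isLeaf_of_isRetic hv c.isRetic_p) (ne_of_isLeaf_of_isTree hv c.isTree_q)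
    (fun e => hki (Fin.ext ((e ▸ hvk).symm.trans hi)))
    (fun e => hkj (Fin.ext ((e ▸ hvk).symm.trans hj)))

open Classical in
lemma map_filter_isVT_reduce (c : N.RetCherryNbhd xi xj p q r s) :
    (Finset.univ.filter fun x : N⁽ⁱʲ⁾.V => N⁽ⁱʲ⁾.isVT x).map
        (⟨Subtype.val, Subtype.val_injective⟩ : N⁽ⁱʲ⁾.V ↪ N.V) =
      (Finset.univ.filter fun v => N.isVT v).erase q := by
  ext v
  simp only [Finset.mem_map, Finset.mem_filter, Finset.mem_univ, true_and, Finset.mem_erase]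
  constructor
  · rintro ⟨x, hx, rfl⟩
    exact ⟨x.2.2, (c.isVT_reduce x).1 hx⟩
  · rintro ⟨hvq, hv⟩
    have hvp : v ≠ p := hv.elim (ne_of_isLeaf_of_isRetic · c.isRetic_p)
      (ne_of_isTree_of_isRetic · c.isRetic_p)
    exact ⟨⟨v, hvp, hvq⟩, (c.isVT_reduce _).2 hv, rfl⟩

open Classical in
lemma muRep_reduce (hN : N.Valid) (c : N.RetCherryNbhd xi xj p q r s) (hi : N.label xi = i)
    (hj : N.label xj = j) : N⁽ⁱʲ⁾.muRep = retCherryRed i j N.muRep := by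
  have hq : q ∈ Finset.univ.filter fun v => N.isVT v :=
    Finset.mem_filter.2 ⟨Finset.mem_univ q, .inr c.isTree_q⟩
  have hsplit : N.muRep =
      N.mu q ::ₘ ((Finset.univ.filter fun v => N.isVT v).erase q).val.map N.mu := by
    conv_lhs => rw [muRep, ← Finset.insert_erase hq]
    rw [Finset.insert_val_of_notMem (Finset.notMem_erase _ _), Multiset.map_cons]
  rw [hsplit, c.mu_q_eq_delta hN hi hj, retCherryRed, Multiset.erase_cons_head, muRep,
    ← c.map_filter_isVT_reduce, Finset.map_val, Multiset.map_map, Multiset.map_map]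
  refine Multiset.map_congr rfl fun x _ => funext fun k => ?_
  simp only [Function.comp_apply]
  split_ifs with hk0 hki
  · exact hk0 ▸ c.mu_reduce_zero hN hi x
  · exact hki ▸ c.mu_reduce_i hN hi hj x
  · exact c.mu_reduce_of_ne hi hk0 hki x

end RetCherryNbhd

end Reduce

/-- for a reticulated-cherry `(i,j)` with parents `p, q` of the
leaves `xi, xj`, every tree node `u ≠ q` of `N` survives in `N^{(i,j)}` with
`μ'_i(u) = μ_i(u) − μ_j(u)`, `μ'_0(u) = μ_0(u) − μ_i(u)`, and the other
coordinates unchanged; hence `𝛍(N^{(i,j)}) = 𝛍(N)^{(i,j)}`. -/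
theorem stmt11 {n : ℕ} (N : BPN n) (hN : N.Valid) (i j : Fin (n + 1))
    (xi xj p q : N.V) (h : N.IsRetCherry i j xi xj p q) :
    (∀ (u : N.V) (hu : u ≠ p ∧ u ≠ q), N.isTree u →
      (N.retCherryReduce xi xj p q).mu ⟨u, hu⟩ i = N.mu u i - N.mu u j ∧
      (N.retCherryReduce xi xj p q).mu ⟨u, hu⟩ 0 = N.mu u 0 - N.mu u i ∧
      ∀ k : Fin (n + 1), k ≠ 0 → k ≠ i →
        (N.retCherryReduce xi xj p q).mu ⟨u, hu⟩ k = N.mu u k) ∧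
    (N.retCherryReduce xi xj p q).muRep = retCherryRed i j N.muRep := by
  obtain ⟨r, s, c⟩ := h.exists_retCherryNbhd
  have hi : N.label xi = i := h.2.1
  have hj : N.label xj = j := h.2.2.2.1
  exact ⟨fun u hu _ => ⟨c.mu_reduce_i hN hi hj ⟨u, hu⟩, c.mu_reduce_zero hN hi ⟨u, hu⟩,
      fun k hk0 hki => c.mu_reduce_of_ne hi hk0 hki ⟨u, hu⟩⟩,
    c.muRep_reduce hN hi hj⟩

end BPN
end
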